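/- arXiv:2511.13699 — 7 statements merged into one kernel-verified Lean document; each statement's English description precedes it below -/
import Mathlib

section
/- (Closer is better.) Let ℓ ∈ L* and let a, b, c ∈ [0,1] with a ≤ b ≤ c. Then ℓ(b, c) ≤ ℓ(a, c) and ℓ(b, a) ≤ ℓ(c, a), where ℓ(p, q) = q·ℓ(p,1) + (1−q)·ℓ(p,0). That is, for a proper loss, moving the prediction toward the true Bernoulli parameter cannot increase the expected loss. -/
open MeasureTheory Set

noncomputable section

/-- Expected loss of prediction `p` when the outcome is `y ~ Bernoulli(q)`:
`ℓ(p,q) = q·ℓ(p,1) + (1−q)·ℓ(p,0)`. -/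
def elos (ℓ : ℝ → ℝ → ℝ) (p q : ℝ) : ℝ := q * ℓ p 1 + (1 - q) * ℓ p 0

/-- A loss is proper if truthful prediction minimizes expected loss. -/
def IsProper (ℓ : ℝ → ℝ → ℝ) : Prop :=
  ∀ p ∈ Icc (0:ℝ) 1, ∀ q ∈ Icc (0:ℝ) 1, elos ℓ q q ≤ elos ℓ p q

/-- The class `L*` of proper losses with `|ℓ(p,1) − ℓ(p,0)| ≤ 1`. -/
def Lstar (ℓ : ℝ → ℝ → ℝ) : Prop :=
  IsProper ℓ ∧ ∀ p ∈ Icc (0:ℝ) 1, |ℓ p 1 - ℓ p 0| ≤ 1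

/-- Projection onto `[0,1]`. -/
def proj01 (x : ℝ) : ℝ := max 0 (min 1 x)

/-- Calibration decision loss of `J` relative to the post-processing class `K`:
`sup` over `ℓ ∈ L*` and `κ ∈ K` of `E[ℓ(p,y) − ℓ(κ(p),y)]`. -/
def CDL (K : Set (ℝ → ℝ)) (J : Measure (ℝ × ℝ)) : ℝ :=
  sSup { x | ∃ ℓ κ, Lstar ℓ ∧ κ ∈ K ∧
    x = ∫ z, (ℓ z.1 z.2 - ℓ (κ z.1) z.2) ∂J }

/-- `sign_s(t)`: `+1` if `t > 0`, `−1` if `t < 0`, and `s` if `t = 0`. -/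
def signS (s t : ℝ) : ℝ := if 0 < t then 1 else if t < 0 then -1 else s

/-- `sign₊ = sign_{+1}`. -/
def signP (t : ℝ) : ℝ := signS 1 t

/-- The V-shaped loss `ℓ_{v,s}(p,y) = −sign_s(p−v)·(y−v)`. -/
def vloss (v s : ℝ) : ℝ → ℝ → ℝ := fun p y => -(signS s (p - v)) * (y - v)

/-- A valid post-processing class: maps `[0,1]` to `[0,1]`, contains the identity, and
is translation invariant. -/
def ValidClass (K : Set (ℝ → ℝ)) : Prop :=
  (∀ κ ∈ K, ∀ p ∈ Icc (0:ℝ) 1, κ p ∈ Icc (0:ℝ) 1) ∧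
  ((fun p : ℝ => p) ∈ K) ∧
  (∀ s t : ℝ, ∀ κ ∈ K, (fun p : ℝ => proj01 (κ (proj01 (p + s)) + t)) ∈ K)

/-- Upper thresholds of a post-processing class. -/
def thr (K : Set (ℝ → ℝ)) : Set (ℝ → ℝ) :=
  { w | ∃ κ ∈ K, w = fun p => signP (κ p - 1/2) }

/-- Modified thresholds: `thr(K)` together with all lower thresholds of the identity. -/
def thr' (K : Set (ℝ → ℝ)) : Set (ℝ → ℝ) :=
  thr K ∪ { w | ∃ v : ℝ, w = fun p => -signP (p - v) }

/-- Weight-restricted calibration error `CE_W(J) = sup_{w ∈ W} E[w(p)(y − p)]`. -/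
def CE (W : Set (ℝ → ℝ)) (J : Measure (ℝ × ℝ)) : ℝ :=
  sSup { x | ∃ w ∈ W, x = ∫ z, w z.1 * (z.2 - z.1) ∂J }

/-- A probability distribution on `[0,1] × {0,1}`. -/
def IsPredDist (J : Measure (ℝ × ℝ)) : Prop :=
  IsProbabilityMeasure J ∧ ∀ᵐ z ∂J, z.1 ∈ Icc (0:ℝ) 1 ∧ (z.2 = 0 ∨ z.2 = 1)

/-- The class `M₊` of nondecreasing post-processings `[0,1] → [0,1]`. -/
def Mplus : Set (ℝ → ℝ) :=
  { κ | (∀ p ∈ Icc (0:ℝ) 1, κ p ∈ Icc (0:ℝ) 1) ∧ MonotoneOn κ (Icc (0:ℝ) 1) }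

/-!
For fixed predictions `p` and `q`, the difference `elos ℓ p r - elos ℓ q r` is affine in the
Bernoulli parameter `r`. Properness makes it nonpositive at `r = p` and nonnegative at `r = q`,
so it is nondecreasing along the ray from `p` through `q`, and stays nonnegative past `q`.
-/

theorem elos_eq_add_mul (ℓ : ℝ → ℝ → ℝ) (p q r : ℝ) :
    elos ℓ p r = elos ℓ p q + (r - q) * (ℓ p 1 - ℓ p 0) := by
  unfold elos
  ring

namespace IsProper

variable {ℓ : ℝ → ℝ → ℝ} {p q r : ℝ}

theorem mul_sub_slope_nonneg (hℓ : IsProper ℓ) (hp : p ∈ Icc (0:ℝ) 1) (hq : q ∈ Icc (0:ℝ) 1) :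
    0 ≤ (q - p) * ((ℓ p 1 - ℓ p 0) - (ℓ q 1 - ℓ q 0)) := by
  have hpq := hℓ p hp q hq
  have hqp := hℓ q hq p hp
  unfold elos at hpq hqp
  linear_combination hpq + hqp

theorem elos_le_of_mem_uIcc (hℓ : IsProper ℓ) (hp : p ∈ Icc (0:ℝ) 1) (hq : q ∈ Icc (0:ℝ) 1)
    (hqr : q ∈ uIcc p r) : elos ℓ q r ≤ elos ℓ p r := by
  rcases eq_or_ne q p with rfl | hqp
  · rfl
  have hbetween : 0 ≤ (q - p) * (r - q) := by
    rcases mem_uIcc.1 hqr with h | h <;> nlinarith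
  have hslope : 0 ≤ (r - q) * ((ℓ p 1 - ℓ p 0) - (ℓ q 1 - ℓ q 0)) := by
    refine nonneg_of_mul_nonneg_right (a := (q - p) ^ 2) ?_ (by positivity)
    linear_combination mul_nonneg hbetween (hℓ.mul_sub_slope_nonneg hp hq)
  calc elos ℓ q r = elos ℓ q q + (r - q) * (ℓ q 1 - ℓ q 0) := elos_eq_add_mul ℓ q q r
    _ ≤ elos ℓ p q + (r - q) * (ℓ p 1 - ℓ p 0) := by linarith [hℓ p hp q hq]
    _ = elos ℓ p r := (elos_eq_add_mul ℓ p q r).symm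

end IsProper

/-- Closer is better: for a proper loss, moving the prediction toward the
true Bernoulli parameter cannot increase the expected loss. -/
theorem closer_is_better (ℓ : ℝ → ℝ → ℝ) (hℓ : Lstar ℓ) (a b c : ℝ)
    (ha : a ∈ Icc (0:ℝ) 1) (hb : b ∈ Icc (0:ℝ) 1) (hc : c ∈ Icc (0:ℝ) 1)
    (hab : a ≤ b) (hbc : b ≤ c) :
    elos ℓ b c ≤ elos ℓ a c ∧ elos ℓ b a ≤ elos ℓ c a :=
  ⟨hℓ.1.elos_le_of_mem_uIcc ha hb (mem_uIcc_of_le hab hbc),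
    hℓ.1.elos_le_of_mem_uIcc hc hb (mem_uIcc_of_ge hab hbc)⟩
end
end

section
/- For every ℓ ∈ L* there exists a constant c ∈ ℝ such that c − 1 ≤ ℓ(p, y) ≤ c + 1 for all p ∈ [0,1] and y ∈ {0,1}. Equivalently, the range of any loss in L* is contained in an interval of length at most 2. -/
open MeasureTheory Set

noncomputable section

/-! Properness at `q = 0` and `q = 1` puts `ℓ(0,0)` and `ℓ(1,1)` below every `ℓ(p,0)` and `ℓ(p,1)`
respectively. Comparing `p` with the prediction `0` at `q = p`, and using `|ℓ(·,1) − ℓ(·,0)| ≤ 1`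
on both sides, gives `ℓ(p,1) ≤ ℓ(0,0) + 1`; symmetrically `ℓ(p,0) ≤ ℓ(1,1) + 1`. Hence all values
lie in `[min A B, max A B + 1]` for `A = ℓ(0,0)`, `B = ℓ(1,1)` with `|A − B| ≤ 1`, an interval of
length at most `2`. -/

@[simp]
lemma elos_zero (ℓ : ℝ → ℝ → ℝ) (p : ℝ) : elos ℓ p 0 = ℓ p 0 := by
  simp [elos]

@[simp]
lemma elos_one (ℓ : ℝ → ℝ → ℝ) (p : ℝ) : elos ℓ p 1 = ℓ p 1 := by
  simp [elos]

namespace IsProper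

variable {ℓ : ℝ → ℝ → ℝ} {p : ℝ}

lemma zero_zero_le (hℓ : IsProper ℓ) (hp : p ∈ Icc (0:ℝ) 1) : ℓ 0 0 ≤ ℓ p 0 := by
  simpa using hℓ p hp 0 (left_mem_Icc.2 zero_le_one)

lemma one_one_le (hℓ : IsProper ℓ) (hp : p ∈ Icc (0:ℝ) 1) : ℓ 1 1 ≤ ℓ p 1 := by
  simpa using hℓ p hp 1 (right_mem_Icc.2 zero_le_one)

end IsProper

namespace Lstar

variable {ℓ : ℝ → ℝ → ℝ} {p : ℝ}

lemma le_zero_zero_add_one (hℓ : Lstar ℓ) (hp : p ∈ Icc (0:ℝ) 1) : ℓ p 1 ≤ ℓ 0 0 + 1 := by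
  have h0 : (0:ℝ) ∈ Icc (0:ℝ) 1 := left_mem_Icc.2 zero_le_one
  have hproper : elos ℓ p p ≤ elos ℓ 0 p := hℓ.1 0 h0 p hp
  have hgap_p := abs_le.1 (hℓ.2 p hp)
  have hgap_0 := abs_le.1 (hℓ.2 0 h0)
  have hlow : (1 - p) * (ℓ p 1 - 1) ≤ (1 - p) * ℓ p 0 :=
    mul_le_mul_of_nonneg_left (by linarith) (by linarith [hp.2])
  have hhigh : p * ℓ 0 1 ≤ p * (ℓ 0 0 + 1) :=
    mul_le_mul_of_nonneg_left (by linarith) hp.1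
  simp only [elos] at hproper
  linarith

lemma le_one_one_add_one (hℓ : Lstar ℓ) (hp : p ∈ Icc (0:ℝ) 1) : ℓ p 0 ≤ ℓ 1 1 + 1 := by
  have h1 : (1:ℝ) ∈ Icc (0:ℝ) 1 := right_mem_Icc.2 zero_le_one
  have hproper : elos ℓ p p ≤ elos ℓ 1 p := hℓ.1 1 h1 p hp
  have hgap_p := abs_le.1 (hℓ.2 p hp)
  have hgap_1 := abs_le.1 (hℓ.2 1 h1)
  have hlow : p * (ℓ p 0 - 1) ≤ p * ℓ p 1 :=
    mul_le_mul_of_nonneg_left (by linarith) hp.1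
  have hhigh : (1 - p) * ℓ 1 0 ≤ (1 - p) * (ℓ 1 1 + 1) :=
    mul_le_mul_of_nonneg_left (by linarith) (by linarith [hp.2])
  simp only [elos] at hproper
  linarith

end Lstar

/-- the range of any loss in `L*` lies in an interval of length at most `2`. -/
theorem Lstar_range_bounded (ℓ : ℝ → ℝ → ℝ) (hℓ : Lstar ℓ) :
    ∃ c : ℝ, ∀ p ∈ Icc (0:ℝ) 1, ∀ y ∈ ({0, 1} : Set ℝ),
      c - 1 ≤ ℓ p y ∧ ℓ p y ≤ c + 1 := by
  have h0 : (0:ℝ) ∈ Icc (0:ℝ) 1 := left_mem_Icc.2 zero_le_one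
  have h1 : (1:ℝ) ∈ Icc (0:ℝ) 1 := right_mem_Icc.2 zero_le_one
  have hAB : ℓ 0 0 ≤ ℓ 1 1 + 1 := hℓ.le_one_one_add_one h0
  have hBA : ℓ 1 1 ≤ ℓ 0 0 + 1 := hℓ.le_zero_zero_add_one h1
  refine ⟨(ℓ 0 0 + ℓ 1 1 + 1) / 2, fun p hp y hy => ?_⟩
  rcases hy with rfl | rfl
  · have := hℓ.1.zero_zero_le hp
    have := hℓ.le_one_one_add_one hp
    constructor <;> linarith
  · have := hℓ.1.one_one_le hp
    have := hℓ.le_zero_zero_add_one hp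
    constructor <;> linarith
end
end

section
/- Let L₀ be the set of losses consisting of all V-shaped losses ℓ_v⁺ and ℓ_v⁻ for v ∈ [0,1], together with all constant losses (losses whose value does not depend on (p, y)). Then for every ℓ ∈ L* and every ε > 0 there exist finitely many losses ℓ₁, …, ℓ_k ∈ L₀ and weights λ₁, …, λ_k ≥ 0 with λ₁ + ⋯ + λ_k = 1 such that |ℓ(p, y) − Σᵢ λᵢ ℓᵢ(p, y)| ≤ ε for all p ∈ [0,1] and y ∈ {0,1}. -/
open MeasureTheory Set

noncomputable section

/-- The base class `L₀`: V-shaped losses `ℓ_v⁺, ℓ_v⁻` for `v ∈ [0,1]` and constant losses. -/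
def L0 : Set (ℝ → ℝ → ℝ) :=
  { ℓ | (∃ v ∈ Icc (0:ℝ) 1, ℓ = vloss v 1 ∨ ℓ = vloss v (-1)) ∨ ∃ c : ℝ, ℓ = fun _ _ => c }

set_option linter.unusedSectionVars false
set_option linter.unusedVariables false
namespace VA
open Finset

lemma signS_pos {t : ℝ} (s : ℝ) (h : 0 < t) : signS s t = 1 := if_pos h

lemma signS_neg {t : ℝ} (s : ℝ) (h : t < 0) : signS s t = -1 := by
  unfold signS; rw [if_neg (by linarith), if_pos h]

lemma signS_zero (s : ℝ) : signS s 0 = s := by unfold signS; norm_num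

lemma abs_signS (s t : ℝ) (hs : |s| ≤ 1) : |signS s t| ≤ 1 := by
  unfold signS; split_ifs <;> simp [hs]

lemma vloss_decomp (v s p y : ℝ) :
    vloss v s p y = -|p - v| + (y - p) * (-(signS s (p - v))) := by
  unfold vloss
  rcases lt_trichotomy p v with h|h|h
  · rw [signS_neg s (by linarith : p - v < 0), abs_of_neg (by linarith : p - v < 0)]; ring
  · rw [h, sub_self, signS_zero, abs_zero]; ring
  · rw [signS_pos s (by linarith : (0:ℝ) < p - v), abs_of_pos (by linarith : (0:ℝ) < p - v)]; ring

lemma abs_super (v p q σ : ℝ) (h1 : |σ| ≤ 1) (h2 : v < p → σ = -1) (h3 : p < v → σ = 1) :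
    -|q - v| ≤ -|p - v| + (q - p) * σ := by
  rcases lt_trichotomy p v with h|h|h
  · rw [h3 h, abs_of_neg (by linarith : p - v < 0)]
    have ha := neg_abs_le (q - v); have hb := le_abs_self (q - v); linarith
  · subst h
    rw [sub_self, abs_zero]
    have : |(q - p) * σ| ≤ |q - p| := by
      rw [abs_mul]; nlinarith [abs_nonneg (q - p)]
    have h4 := neg_abs_le ((q - p) * σ)
    linarith
  · rw [h2 h, abs_of_pos (by linarith : (0:ℝ) < p - v)]
    have ha := neg_abs_le (q - v); have hb := le_abs_self (q - v); linarith


variable (g : ℝ → ℝ) (n : ℕ)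

def del : ℝ := 1 / n
def TT : ℝ := g 0 - g 1
def hf (p : ℝ) : ℝ := g 0 - g p
def ff (k : ℕ) : ℝ := min ((k:ℝ) * del n) (TT g) / 2
def Sset (i : ℕ) : Set ℝ := {q | q ∈ Icc (0:ℝ) 1 ∧ hf g q < ((i:ℝ) + 1) * del n}
def vv (i : ℕ) : ℝ := sSup (Sset g n i)
def wP (i : ℕ) (p : ℝ) : ℝ :=
  min (ff g n (i+1) - ff g n i) (max 0 (hf g p / 2 - ff g n i))
def lamP (i : ℕ) : ℝ := wP g n i (vv g n i)
def lamM (i : ℕ) : ℝ := (ff g n (i+1) - ff g n i) - lamP g n i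
def cmid : ℝ := (g 0 + g 1) / 2
def alC : ℝ := max (cmid g) 0
def beC : ℝ := max (-cmid g) 0
def aa : ℝ := 1 - 1 / n
def lamC : ℝ := 1 - aa n * (ff g n (2*n) - ff g n 0 + alC g + beC g)
def FaIn (p : ℝ) : ℝ :=
  (∑ i ∈ range (2*n), (ff g n (i+1) - ff g n i) * (-|p - vv g n i|))
    + alC g * (-(1 - p)) + beC g * (-p)
def WaIn (p : ℝ) : ℝ :=
  cmid g + ∑ i ∈ range (2*n),
    (lamP g n i * (-(signS 1 (p - vv g n i))) + lamM g n i * (-(signS (-1) (p - vv g n i))))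
def Cc (r0 : ℝ) : ℝ := (r0 - aa n * FaIn g n 0) / lamC g n
def Fa (r0 : ℝ) (p : ℝ) : ℝ := aa n * FaIn g n p + lamC g n * Cc g n r0
def Wa (p : ℝ) : ℝ := aa n * WaIn g n p

-- basic facts
lemma del_nonneg : 0 ≤ del n := by unfold del; positivity

lemma del_pos (hn : 1 ≤ n) : 0 < del n := by
  unfold del
  have : (0:ℝ) < n := by exact_mod_cast Nat.lt_of_lt_of_le Nat.zero_lt_one hn
  positivity

lemma aa_nonneg (hn : 1 ≤ n) : 0 ≤ aa n := by
  unfold aa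
  have h1 : (1:ℝ) ≤ n := by exact_mod_cast hn
  have : 1 / (n:ℝ) ≤ 1 := by
    rw [div_le_one (by linarith)]; linarith
  linarith

lemma aa_le_one : aa n ≤ 1 := by
  unfold aa; have := del_nonneg n; unfold del at this; linarith

lemma ff_mono (k : ℕ) : ff g n k ≤ ff g n (k+1) := by
  unfold ff
  have h : (k:ℝ) * del n ≤ ((k:ℕ)+1 : ℝ) * del n := by
    have := del_nonneg n; nlinarith
  have : min ((k:ℝ) * del n) (TT g) ≤ min (((k:ℕ)+1 : ℝ) * del n) (TT g) :=
    min_le_min h le_rfl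
  push_cast
  push_cast at this
  linarith

lemma lamP_nonneg (i : ℕ) : 0 ≤ lamP g n i := by
  unfold lamP wP
  have h1 := ff_mono g n i
  exact le_min (by linarith) (le_max_left _ _)

lemma wP_nonneg (i : ℕ) (p : ℝ) : 0 ≤ wP g n i p := by
  unfold wP
  have h1 := ff_mono g n i
  exact le_min (by linarith) (le_max_left _ _)

lemma lamM_nonneg (i : ℕ) : 0 ≤ lamM g n i := by
  unfold lamM lamP wP
  have := min_le_left (ff g n (i+1) - ff g n i)
    (max 0 (hf g (vv g n i) / 2 - ff g n i))
  linarith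

lemma alC_nonneg : 0 ≤ alC g := le_max_right _ _
lemma beC_nonneg : 0 ≤ beC g := le_max_right _ _

lemma alC_sub_beC : alC g - beC g = cmid g := by
  unfold alC beC
  rcases le_total (cmid g) 0 with h|h
  · rw [max_eq_right h, max_eq_left (by linarith)]; ring
  · rw [max_eq_left h, max_eq_right (by linarith)]; ring


section Gfacts
variable (hga : ∀ p ∈ Icc (0:ℝ) 1, ∀ q ∈ Icc (0:ℝ) 1, p ≤ q → g q ≤ g p)
variable (hgb : ∀ p ∈ Icc (0:ℝ) 1, |g p| ≤ 1)

lemma mem01 : (0:ℝ) ∈ Icc (0:ℝ) 1 := by constructor <;> norm_num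
lemma mem11 : (1:ℝ) ∈ Icc (0:ℝ) 1 := by constructor <;> norm_num

include hga in
lemma TT_nonneg : 0 ≤ TT g := by
  unfold TT
  have := hga 0 (mem01) 1 (mem11) (by norm_num)
  linarith

include hgb in
lemma TT_le_two : TT g ≤ 2 := by
  unfold TT
  have h0 := abs_le.mp (hgb 0 mem01)
  have h1 := abs_le.mp (hgb 1 mem11)
  linarith

include hga in
lemma hf_nonneg {p : ℝ} (hp : p ∈ Icc (0:ℝ) 1) : 0 ≤ hf g p := by
  unfold hf; have := hga 0 mem01 p hp hp.1; linarith

include hga in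
lemma hf_le_TT {p : ℝ} (hp : p ∈ Icc (0:ℝ) 1) : hf g p ≤ TT g := by
  unfold hf TT; have := hga p hp 1 mem11 hp.2; linarith

include hga in
lemma hf_mono {p q : ℝ} (hp : p ∈ Icc (0:ℝ) 1) (hq : q ∈ Icc (0:ℝ) 1) (h : p ≤ q) :
    hf g p ≤ hf g q := by
  unfold hf; have := hga p hp q hq h; linarith

include hga in
lemma ff_zero : ff g n 0 = 0 := by
  unfold ff
  rw [Nat.cast_zero, zero_mul, min_eq_left (TT_nonneg g hga)]
  norm_num

include hga hgb in
lemma ff_top (hn : 1 ≤ n) : ff g n (2*n) = TT g / 2 := by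
  unfold ff
  have hne : (n:ℝ) ≠ 0 := by
    have : (0:ℝ) < n := by exact_mod_cast Nat.lt_of_lt_of_le Nat.zero_lt_one hn
    linarith
  have h2 : ((2*n : ℕ):ℝ) * del n = 2 := by
    unfold del; push_cast; field_simp
  rw [h2, min_eq_right (TT_le_two g hgb)]

lemma zero_mem_Sset (hn : 1 ≤ n) (i : ℕ) : (0:ℝ) ∈ Sset g n i := by
  refine ⟨mem01, ?_⟩
  have hd := del_pos n hn
  have : (0:ℝ) < ((i:ℝ) + 1) * del n := by positivity
  unfold hf; simpa using this

lemma Sset_nonempty (hn : 1 ≤ n) (i : ℕ) : (Sset g n i).Nonempty :=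
  ⟨0, zero_mem_Sset g n hn i⟩

lemma Sset_bdd (i : ℕ) : BddAbove (Sset g n i) :=
  ⟨1, fun q hq => hq.1.2⟩

lemma vv_mem (hn : 1 ≤ n) (i : ℕ) : vv g n i ∈ Icc (0:ℝ) 1 := by
  constructor
  · exact le_csSup (Sset_bdd g n i) (zero_mem_Sset g n hn i)
  · exact csSup_le (Sset_nonempty g n hn i) (fun q hq => hq.1.2)


include hga in
lemma vv_lt {i : ℕ} {p : ℝ} (hp : p ∈ Icc (0:ℝ) 1) (h : vv g n i < p) :
    ((i:ℝ) + 1) * del n ≤ hf g p := by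
  by_contra hc
  push_neg at hc
  have : p ∈ Sset g n i := ⟨hp, hc⟩
  have := le_csSup (Sset_bdd g n i) this
  unfold vv at h
  linarith

include hga in
lemma lt_vv (hn : 1 ≤ n) {i : ℕ} {p : ℝ} (hp : p ∈ Icc (0:ℝ) 1) (h : p < vv g n i) :
    hf g p < ((i:ℝ) + 1) * del n := by
  obtain ⟨q, hq, hpq⟩ := exists_lt_of_lt_csSup (Sset_nonempty g n hn i) h
  calc hf g p ≤ hf g q := hf_mono g hga hp hq.1 hpq.le
    _ < ((i:ℝ) + 1) * del n := hq.2

-- telescoping per-term form for wP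
lemma wP_eq_min (i : ℕ) (p : ℝ) :
    wP g n i p = min (ff g n (i+1)) (hf g p / 2) - min (ff g n i) (hf g p / 2) := by
  have hm := ff_mono g n i
  unfold wP
  rcases le_total (hf g p / 2) (ff g n i) with h|h
  · rw [min_eq_right (h.trans hm), min_eq_right h,
      max_eq_left (by linarith), min_eq_right (by linarith [wP_nonneg g n i p])]
    · linarith
  · rcases le_total (hf g p / 2) (ff g n (i+1)) with h2|h2
    · rw [min_eq_right h2, min_eq_left h, max_eq_right (by linarith),
        min_eq_right (by linarith)]
    · rw [min_eq_left h2, min_eq_left h, max_eq_right (by linarith),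
        min_eq_left (by linarith)]

include hga hgb in
lemma wP_sum (hn : 1 ≤ n) {p : ℝ} (hp : p ∈ Icc (0:ℝ) 1) :
    ∑ i ∈ range (2*n), wP g n i p = hf g p / 2 := by
  have : ∀ i ∈ range (2*n), wP g n i p
      = min (ff g n (i+1)) (hf g p / 2) - min (ff g n i) (hf g p / 2) :=
    fun i _ => wP_eq_min g n i p
  rw [Finset.sum_congr rfl this, Finset.sum_range_sub (fun k => min (ff g n k) (hf g p / 2))]
  rw [ff_top g n hga hgb hn, ff_zero g n hga]
  rw [min_eq_right (by linarith [hf_le_TT g hga hp]),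
    min_eq_left (by linarith [hf_nonneg g hga hp])]
  ring

include hga hgb in
lemma ffd_sum (hn : 1 ≤ n) :
    ∑ i ∈ range (2*n), (ff g n (i+1) - ff g n i) = TT g / 2 := by
  rw [Finset.sum_range_sub (fun k => ff g n k), ff_top g n hga hgb hn, ff_zero g n hga]
  ring


include hga hgb in
lemma Wi_bounds (hn : 1 ≤ n) {p : ℝ} (hp : p ∈ Icc (0:ℝ) 1) (i : ℕ) :
    ((ff g n (i+1) - ff g n i) - 2 * wP g n i p
      ≤ lamP g n i * (-(signS 1 (p - vv g n i))) + lamM g n i * (-(signS (-1) (p - vv g n i))))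
    ∧ (lamP g n i * (-(signS 1 (p - vv g n i))) + lamM g n i * (-(signS (-1) (p - vv g n i)))
      ≤ (ff g n (i+1) - ff g n i) - 2 * wP g n i p
        + (if i = Nat.floor (hf g p / del n) then del n else 0)) := by
  have hite : 0 ≤ (if i = Nat.floor (hf g p / del n) then del n else 0) := by
    split_ifs
    · exact del_nonneg n
    · exact le_rfl
  have hLi := ff_mono g n i
  have hwnn := wP_nonneg g n i p
  have hlP := lamP_nonneg g n i
  have hlM := lamM_nonneg g n i
  have hLM : lamP g n i + lamM g n i = ff g n (i+1) - ff g n i := by unfold lamM; ring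
  have hdp := del_pos n hn
  rcases lt_trichotomy (vv g n i) p with h|h|h
  · rw [signS_pos 1 (by linarith : (0:ℝ) < p - vv g n i),
      signS_pos (-1) (by linarith : (0:ℝ) < p - vv g n i)]
    have h1 : ((i:ℝ) + 1) * del n ≤ hf g p := vv_lt g n hga hp h
    have hffle : ff g n (i+1) ≤ hf g p / 2 := by
      unfold ff
      have h3 : min (((i+1 : ℕ)):ℝ) ((TT g)) = min (((i+1:ℕ)):ℝ) (TT g) := rfl
      have h4 : min (((i+1:ℕ):ℝ) * del n) (TT g) ≤ ((i:ℝ) + 1) * del n := by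
        push_cast; exact min_le_left _ _
      linarith
    have hw : wP g n i p = ff g n (i+1) - ff g n i := by
      unfold wP
      rw [max_eq_right (by linarith), min_eq_left (by linarith)]
    constructor <;> linarith
  · rw [h, sub_self, signS_zero, signS_zero]
    have hl : lamP g n i = wP g n i p := by unfold lamP; rw [h]
    constructor <;> linarith
  · rw [signS_neg 1 (by linarith : p - vv g n i < 0),
      signS_neg (-1) (by linarith : p - vv g n i < 0)]
    have h2 : hf g p < ((i:ℝ) + 1) * del n := lt_vv g n hga hn hp h
    by_cases hi : i = Nat.floor (hf g p / del n)
    · rw [if_pos hi]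
      have hwub : wP g n i p ≤ del n / 2 := by
        have hb : hf g p / 2 - ff g n i ≤ del n / 2 := by
          unfold ff
          rcases le_total ((i:ℝ) * del n) (TT g) with hc|hc
          · rw [min_eq_left hc]; linarith
          · rw [min_eq_right hc]; linarith [hf_le_TT g hga hp]
        calc wP g n i p ≤ max 0 (hf g p / 2 - ff g n i) := min_le_right _ _
          _ ≤ del n / 2 := max_le (by linarith) hb
      constructor <;> linarith
    · rw [if_neg hi]
      have hw0 : wP g n i p ≤ 0 := by
        have hfi : hf g p ≤ (i:ℝ) * del n := by
          by_contra hc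
          push_neg at hc
          apply hi
          symm
          rw [Nat.floor_eq_iff (by have h5 := hf_nonneg g hga hp; positivity)]
          constructor
          · rw [le_div_iff₀ hdp]; linarith
          · rw [div_lt_iff₀ hdp]; linarith
        have hb : hf g p / 2 - ff g n i ≤ 0 := by
          unfold ff
          have := le_min hfi (hf_le_TT g hga hp)
          linarith
        calc wP g n i p ≤ max 0 (hf g p / 2 - ff g n i) := min_le_right _ _
          _ ≤ 0 := max_le le_rfl hb
      constructor <;> linarith

include hga hgb in
lemma WaIn_lb (hn : 1 ≤ n) {p : ℝ} (hp : p ∈ Icc (0:ℝ) 1) : g p ≤ WaIn g n p := by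
  unfold WaIn
  have key := Finset.sum_le_sum (fun i (_ : i ∈ range (2*n)) =>
    (Wi_bounds g n hga hgb hn hp i).1)
  have hcalc : ∑ i ∈ range (2*n), ((ff g n (i+1) - ff g n i) - 2 * wP g n i p)
      = TT g / 2 - 2 * (hf g p / 2) := by
    rw [Finset.sum_sub_distrib, ffd_sum g n hga hgb hn, ← Finset.mul_sum,
      wP_sum g n hga hgb hn hp]
  rw [hcalc] at key
  have hid : cmid g + (TT g / 2 - 2 * (hf g p / 2)) = g p := by
    unfold cmid TT hf; ring
  linarith

include hga hgb in
lemma WaIn_ub (hn : 1 ≤ n) {p : ℝ} (hp : p ∈ Icc (0:ℝ) 1) : WaIn g n p ≤ g p + del n := by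
  unfold WaIn
  have key := Finset.sum_le_sum (fun i (_ : i ∈ range (2*n)) =>
    (Wi_bounds g n hga hgb hn hp i).2)
  have hcalc : ∑ i ∈ range (2*n), ((ff g n (i+1) - ff g n i) - 2 * wP g n i p
        + (if i = Nat.floor (hf g p / del n) then del n else 0))
      ≤ TT g / 2 - 2 * (hf g p / 2) + del n := by
    rw [Finset.sum_add_distrib, Finset.sum_sub_distrib, ffd_sum g n hga hgb hn,
      ← Finset.mul_sum, wP_sum g n hga hgb hn hp,
      Finset.sum_ite_eq' (range (2*n)) _ (fun _ => del n)]
    split_ifs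
    · exact le_rfl
    · linarith [del_nonneg n]
  have hid : cmid g + (TT g / 2 - 2 * (hf g p / 2)) = g p := by
    unfold cmid TT hf; ring
  linarith


end Gfacts

lemma FaIn_super (p q : ℝ) : FaIn g n q ≤ FaIn g n p + (q - p) * WaIn g n p := by
  have key : ∀ i ∈ range (2*n),
      (ff g n (i+1) - ff g n i) * (-|q - vv g n i|)
        ≤ (ff g n (i+1) - ff g n i) * (-|p - vv g n i|)
          + (q - p) * (lamP g n i * (-(signS 1 (p - vv g n i)))
            + lamM g n i * (-(signS (-1) (p - vv g n i)))) := by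
    intro i _
    set v := vv g n i with hv
    have habs1 : -|q - v| ≤ -|p - v| + (q - p) * (-(signS 1 (p - v))) := by
      apply abs_super
      · rw [abs_neg]; exact abs_signS 1 (p - v) (by norm_num)
      · intro h; rw [signS_pos 1 (by linarith : (0:ℝ) < p - v)]
      · intro h; rw [signS_neg 1 (by linarith : p - v < 0)]; norm_num
    have habs2 : -|q - v| ≤ -|p - v| + (q - p) * (-(signS (-1) (p - v))) := by
      apply abs_super
      · rw [abs_neg]; exact abs_signS (-1) (p - v) (by norm_num)
      · intro h; rw [signS_pos (-1) (by linarith : (0:ℝ) < p - v)]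
      · intro h; rw [signS_neg (-1) (by linarith : p - v < 0)]; norm_num
    have h1 := mul_le_mul_of_nonneg_left habs1 (lamP_nonneg g n i)
    have h2 := mul_le_mul_of_nonneg_left habs2 (lamM_nonneg g n i)
    have hLM : lamP g n i + lamM g n i = ff g n (i+1) - ff g n i := by unfold lamM; ring
    rw [← hLM]
    linarith [h1, h2]
  have hsum := Finset.sum_le_sum key
  rw [Finset.sum_add_distrib, ← Finset.mul_sum] at hsum
  have habc : alC g - beC g = cmid g := alC_sub_beC g
  unfold FaIn WaIn
  rw [← habc]
  linarith [hsum]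

lemma Fa_super (hn : 1 ≤ n) (r0 p q : ℝ) :
    Fa g n r0 q ≤ Fa g n r0 p + (q - p) * Wa g n p := by
  unfold Fa Wa
  have h := mul_le_mul_of_nonneg_left (FaIn_super g n p q) (aa_nonneg n hn)
  linarith [h]

section Gfacts2
variable (hga : ∀ p ∈ Icc (0:ℝ) 1, ∀ q ∈ Icc (0:ℝ) 1, p ≤ q → g q ≤ g p)
variable (hgb : ∀ p ∈ Icc (0:ℝ) 1, |g p| ≤ 1)

include hga hgb in
lemma lamC_lb (hn : 1 ≤ n) : 1 / (n:ℝ) ≤ lamC g n := by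
  unfold lamC
  rw [ff_top g n hga hgb hn, ff_zero g n hga]
  have hX : TT g / 2 - 0 + alC g + beC g ≤ 1 := by
    unfold TT alC beC cmid
    have h0 := abs_le.mp (hgb 0 mem01)
    have h1 := abs_le.mp (hgb 1 mem11)
    rcases le_total ((g 0 + g 1)/2) 0 with h|h
    · rw [max_eq_right h, max_eq_left (by linarith)]; linarith
    · rw [max_eq_left h, max_eq_right (by linarith)]; linarith
  have hXnn : 0 ≤ TT g / 2 - 0 + alC g + beC g := by
    have := TT_nonneg g hga
    have := alC_nonneg g
    have := beC_nonneg g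
    linarith
  have haa := aa_nonneg n hn
  have haa1 := aa_le_one n
  have : aa n * (TT g / 2 - 0 + alC g + beC g) ≤ aa n * 1 :=
    mul_le_mul_of_nonneg_left hX haa
  unfold aa at *
  linarith

include hga hgb in
lemma lamC_nonneg (hn : 1 ≤ n) : 0 ≤ lamC g n := by
  have h := lamC_lb g n hga hgb hn
  have : (0:ℝ) < n := by exact_mod_cast Nat.lt_of_lt_of_le Nat.zero_lt_one hn
  have : 0 < 1 / (n:ℝ) := by positivity
  linarith

include hga hgb in
lemma Fa_zero (hn : 1 ≤ n) (r0 : ℝ) : Fa g n r0 0 = r0 := by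
  have hne : lamC g n ≠ 0 := by
    have h := lamC_lb g n hga hgb hn
    have h2 : (0:ℝ) < n := by exact_mod_cast Nat.lt_of_lt_of_le Nat.zero_lt_one hn
    have : 0 < 1 / (n:ℝ) := by positivity
    linarith
  unfold Fa Cc
  field_simp
  ring

end Gfacts2

section Main
variable (hga : ∀ p ∈ Icc (0:ℝ) 1, ∀ q ∈ Icc (0:ℝ) 1, p ≤ q → g q ≤ g p)
variable (hgb : ∀ p ∈ Icc (0:ℝ) 1, |g p| ≤ 1)

include hga hgb in
lemma Wa_close (hn : 1 ≤ n) {p : ℝ} (hp : p ∈ Icc (0:ℝ) 1) :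
    |g p - Wa g n p| ≤ 2 / n := by
  have h1 := WaIn_lb g n hga hgb hn hp
  have h2 := WaIn_ub g n hga hgb hn hp
  have hgp := abs_le.mp (hgb p hp)
  have haa := aa_nonneg n hn
  have haa1 := aa_le_one n
  have hnp : (0:ℝ) < n := by exact_mod_cast Nat.lt_of_lt_of_le Nat.zero_lt_one hn
  have hWl : aa n * g p ≤ Wa g n p := by
    unfold Wa; exact mul_le_mul_of_nonneg_left h1 haa
  have hWu : Wa g n p ≤ aa n * (g p + del n) := by
    unfold Wa; exact mul_le_mul_of_nonneg_left h2 haa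
  have hinv : 0 < 1 / (n:ℝ) := by positivity
  rw [show aa n = 1 - 1/(n:ℝ) from rfl] at hWl hWu
  rw [show del n = 1/(n:ℝ) from rfl] at hWu
  obtain ⟨c, hc⟩ : ∃ c : ℝ, c = 1/(n:ℝ) := ⟨_, rfl⟩
  rw [← hc] at hWl hWu hinv
  have h2c : 2/(n:ℝ) = 2*c := by rw [hc]; ring
  have hm1 : c * g p ≤ c * 1 := mul_le_mul_of_nonneg_left hgp.2 hinv.le
  have hm2 : c * (-1) ≤ c * g p := mul_le_mul_of_nonneg_left hgp.1 hinv.le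
  rw [abs_le, h2c]
  constructor <;> nlinarith [sq_nonneg c]

include hga hgb in
lemma R_Fa_close (R : ℝ → ℝ)
    (hA : ∀ p ∈ Icc (0:ℝ) 1, ∀ q ∈ Icc (0:ℝ) 1, R q ≤ R p + (q - p) * g p)
    (hn : 1 ≤ n) {p : ℝ} (hp : p ∈ Icc (0:ℝ) 1) :
    |R p - Fa g n (R 0) p| ≤ 4 / n := by
  have hnp : (0:ℝ) < n := by exact_mod_cast Nat.lt_of_lt_of_le Nat.zero_lt_one hn
  set r0 := R 0 with hr0
  set qf : ℕ → ℝ := fun k => (k:ℝ) * p / n with hqf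
  have hqmem : ∀ k, k ≤ n → qf k ∈ Icc (0:ℝ) 1 := by
    intro k hk
    constructor
    · have : (0:ℝ) ≤ (k:ℝ) * p / n := by
        have := hp.1; positivity
      simpa [hqf] using this
    · have hkn : (k:ℝ) ≤ n := by exact_mod_cast hk
      have h1 : (k:ℝ) * p / n ≤ 1 := by
        rw [div_le_one hnp]
        nlinarith [hp.1, hp.2]
      simpa [hqf] using h1
  have hstep : ∀ k : ℕ, qf (k+1) - qf k = p / n := by
    intro k; simp only [hqf]; push_cast; ring
  have hq0 : qf 0 = 0 := by simp [hqf]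
  have hqn : qf n = p := by
    simp only [hqf]; field_simp
  have htele : R p - Fa g n r0 p
      = ∑ k ∈ range n, ((R (qf (k+1)) - Fa g n r0 (qf (k+1))) - (R (qf k) - Fa g n r0 (qf k))) := by
    rw [Finset.sum_range_sub (fun k => R (qf k) - Fa g n r0 (qf k))]
    rw [hqn, hq0, Fa_zero g n hga hgb hn r0, ← hr0]
    ring
  have hDelta : 0 ≤ p / n := by have := hp.1; positivity
  have hinvnn : (0:ℝ) ≤ ((n:ℝ))⁻¹ := by positivity
  have hDle : p / n ≤ 1 / n := by
    rw [div_eq_mul_inv, one_div]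
    calc p * (n:ℝ)⁻¹ ≤ 1 * (n:ℝ)⁻¹ := mul_le_mul_of_nonneg_right hp.2 hinvnn
      _ = (n:ℝ)⁻¹ := one_mul _
  have hub : ∀ k ∈ range n,
      (R (qf (k+1)) - Fa g n r0 (qf (k+1))) - (R (qf k) - Fa g n r0 (qf k))
        ≤ ((p/n) * g (qf k) - (p/n) * g (qf (k+1))) + (p/n) * (2/n) := by
    intro k hk
    have hkn := Finset.mem_range.mp hk
    have hq1 := hqmem k (by omega)
    have hq2 := hqmem (k+1) (by omega)
    have hR := hA (qf k) hq1 (qf (k+1)) hq2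
    have hF := Fa_super g n hn r0 (qf (k+1)) (qf k)
    have hW := (abs_le.mp (Wa_close g n hga hgb hn hq2)).2
    have hd := hstep k
    rw [hd] at hR
    have hd2 : qf k - qf (k+1) = -(p/n) := by linarith [hstep k]
    rw [hd2] at hF
    have hWl2 : g (qf (k+1)) - 2/n ≤ Wa g n (qf (k+1)) := by linarith
    have hmul := mul_le_mul_of_nonneg_left hWl2 hDelta
    nlinarith [hmul]
  have hlb : ∀ k ∈ range n,
      -(((p/n) * g (qf k) - (p/n) * g (qf (k+1))) + (p/n) * (2/n))
        ≤ (R (qf (k+1)) - Fa g n r0 (qf (k+1))) - (R (qf k) - Fa g n r0 (qf k)) := by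
    intro k hk
    have hkn := Finset.mem_range.mp hk
    have hq1 := hqmem k (by omega)
    have hq2 := hqmem (k+1) (by omega)
    have hR := hA (qf (k+1)) hq2 (qf k) hq1
    have hF := Fa_super g n hn r0 (qf k) (qf (k+1))
    have hW := (abs_le.mp (Wa_close g n hga hgb hn hq1)).1
    have hd := hstep k
    rw [hd] at hF
    have hd2 : qf k - qf (k+1) = -(p/n) := by linarith [hstep k]
    rw [hd2] at hR
    have hWu2 : Wa g n (qf k) ≤ g (qf k) + 2/n := by linarith
    have hmul := mul_le_mul_of_nonneg_left hWu2 hDelta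
    nlinarith [hmul]
  have hsumub := Finset.sum_le_sum hub
  have hsumlb := Finset.sum_le_sum hlb
  rw [← htele] at hsumub hsumlb
  have hrhs : ∑ k ∈ range n, (((p/n) * g (qf k) - (p/n) * g (qf (k+1))) + (p/n)*(2/n))
      = ((p/n) * g 0 - (p/n) * g p) + (n:ℝ) * ((p/n)*(2/n)) := by
    rw [Finset.sum_add_distrib, Finset.sum_range_sub' (fun k => (p/n) * g (qf k)),
      Finset.sum_const, Finset.card_range, hq0, hqn, nsmul_eq_mul]
  rw [hrhs] at hsumub
  have hsumlb2 : -(((p/n) * g 0 - (p/n) * g p) + (n:ℝ) * ((p/n)*(2/n))) ≤ R p - Fa g n r0 p := by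
    calc -(((p/n) * g 0 - (p/n) * g p) + (n:ℝ) * ((p/n)*(2/n)))
        = ∑ k ∈ range n, -((((p/n) * g (qf k) - (p/n) * g (qf (k+1))) + (p/n)*(2/n))) := by
          rw [← hrhs, ← Finset.sum_neg_distrib]
      _ ≤ R p - Fa g n r0 p := hsumlb
  have hmono : g p ≤ g 0 := hga 0 mem01 p hp hp.1
  have hg0 := abs_le.mp (hgb 0 mem01)
  have hgp2 := abs_le.mp (hgb p hp)
  have hmul1 : (p/n) * (g 0 - g p) ≤ (1/(n:ℝ)) * (g 0 - g p) :=
    mul_le_mul_of_nonneg_right hDle (by linarith)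
  have hmul2 : (1/(n:ℝ)) * (g 0 - g p) ≤ (1/(n:ℝ)) * 2 :=
    mul_le_mul_of_nonneg_left (by linarith) (by positivity)
  have hmul3 : p * (2/(n:ℝ)) ≤ 1 * (2/(n:ℝ)) :=
    mul_le_mul_of_nonneg_right hp.2 (by positivity)
  have hnn : (n:ℝ)*((p/n)*(2/n)) = p * (2/(n:ℝ)) := by
    field_simp
  have hexp : (p/n) * g 0 - (p/n) * g p = (p/n) * (g 0 - g p) := by ring
  have hfour : (1/(n:ℝ))*2 + 1*(2/(n:ℝ)) = 4/(n:ℝ) := by ring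
  rw [abs_le]
  constructor <;> linarith


lemma vloss_one (p y : ℝ) (hp : p ≤ 1) : vloss 1 (-1) p y = -(1 - p) + (y - p) * 1 := by
  unfold vloss
  rcases lt_or_eq_of_le hp with h|h
  · rw [signS_neg (-1) (by linarith : p - 1 < 0)]; ring
  · rw [h, sub_self, signS_zero]; ring

lemma vloss_zero (p y : ℝ) (hp : 0 ≤ p) : vloss 0 1 p y = -p + (y - p) * (-1) := by
  unfold vloss
  rcases lt_or_eq_of_le hp with h|h
  · rw [signS_pos 1 (by linarith : (0:ℝ) < p - 0)]; ring
  · rw [← h, show (0:ℝ) - 0 = 0 from by ring, signS_zero]; ring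

def LL (r0 : ℝ) (i : ℕ) : ℝ → ℝ → ℝ :=
  if i < 2*n then vloss (vv g n i) 1
  else if i < 2*n + 2*n then vloss (vv g n (i - 2*n)) (-1)
  else if i = 2*n + 2*n then vloss 1 (-1)
  else if i = 2*n + 2*n + 1 then vloss 0 1
  else fun _ _ => Cc g n r0

def lamF (i : ℕ) : ℝ :=
  if i < 2*n then aa n * lamP g n i
  else if i < 2*n + 2*n then aa n * lamM g n (i - 2*n)
  else if i = 2*n + 2*n then aa n * alC g
  else if i = 2*n + 2*n + 1 then aa n * beC g
  else lamC g n


lemma lamF_lo {i : ℕ} (h : i < 2*n) : lamF g n i = aa n * lamP g n i := by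
  unfold lamF; rw [if_pos h]

lemma lamF_mid {i : ℕ} (h : i < 2*n) : lamF g n (2*n + i) = aa n * lamM g n i := by
  unfold lamF; rw [if_neg (by omega), if_pos (by omega), Nat.add_sub_cancel_left]

lemma lamF_a : lamF g n (2*n + (2*n + 0)) = aa n * alC g := by
  unfold lamF; rw [if_neg (by omega), if_neg (by omega), if_pos (by omega)]

lemma lamF_b : lamF g n (2*n + (2*n + 1)) = aa n * beC g := by
  unfold lamF; rw [if_neg (by omega), if_neg (by omega), if_neg (by omega), if_pos (by omega)]

lemma lamF_c : lamF g n (2*n + (2*n + 2)) = lamC g n := by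
  unfold lamF; rw [if_neg (by omega), if_neg (by omega), if_neg (by omega), if_neg (by omega)]

lemma LL_lo (r0 : ℝ) {i : ℕ} (h : i < 2*n) : LL g n r0 i = vloss (vv g n i) 1 := by
  unfold LL; rw [if_pos h]

lemma LL_mid (r0 : ℝ) {i : ℕ} (h : i < 2*n) : LL g n r0 (2*n + i) = vloss (vv g n i) (-1) := by
  unfold LL; rw [if_neg (by omega), if_pos (by omega), Nat.add_sub_cancel_left]

lemma LL_a (r0 : ℝ) : LL g n r0 (2*n + (2*n + 0)) = vloss 1 (-1) := by
  unfold LL; rw [if_neg (by omega), if_neg (by omega), if_pos (by omega)]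

lemma LL_b (r0 : ℝ) : LL g n r0 (2*n + (2*n + 1)) = vloss 0 1 := by
  unfold LL; rw [if_neg (by omega), if_neg (by omega), if_neg (by omega), if_pos (by omega)]

lemma LL_c (r0 : ℝ) : LL g n r0 (2*n + (2*n + 2)) = fun _ _ => Cc g n r0 := by
  unfold LL; rw [if_neg (by omega), if_neg (by omega), if_neg (by omega), if_neg (by omega)]

lemma sum_split (F : ℕ → ℝ) :
    ∑ i ∈ range (2*n + (2*n + 3)), F i
      = (∑ i ∈ range (2*n), F i) + (∑ i ∈ range (2*n), F (2*n + i))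
        + F (2*n + (2*n + 0)) + F (2*n + (2*n + 1)) + F (2*n + (2*n + 2)) := by
  rw [Finset.sum_range_add, Finset.sum_range_add]
  norm_num [Finset.sum_range_succ]
  ring

include hga hgb in
lemma lamF_sum (hn : 1 ≤ n) : ∑ i ∈ range (2*n + (2*n + 3)), lamF g n i = 1 := by
  rw [sum_split]
  have h1 : ∀ i ∈ range (2*n), lamF g n i = aa n * lamP g n i :=
    fun i hi => lamF_lo g n (Finset.mem_range.mp hi)
  have h2 : ∀ i ∈ range (2*n), lamF g n (2*n + i) = aa n * lamM g n i :=
    fun i hi => lamF_mid g n (Finset.mem_range.mp hi)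
  rw [Finset.sum_congr rfl h1, Finset.sum_congr rfl h2, lamF_a, lamF_b, lamF_c]
  have hsum2 : (∑ i ∈ range (2*n), aa n * lamP g n i) + ∑ i ∈ range (2*n), aa n * lamM g n i
      = aa n * (TT g / 2) := by
    rw [← Finset.sum_add_distrib, ← ffd_sum g n hga hgb hn, Finset.mul_sum]
    refine Finset.sum_congr rfl (fun i _ => ?_)
    unfold lamM
    ring
  have hlamc : lamC g n = 1 - aa n * (ff g n (2*n) - ff g n 0 + alC g + beC g) := rfl
  rw [ff_top g n hga hgb hn, ff_zero g n hga] at hlamc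
  linarith [hsum2]

include hga hgb in
lemma sum_eq (hn : 1 ≤ n) (r0 : ℝ) {p : ℝ} (hp : p ∈ Icc (0:ℝ) 1) (y : ℝ) :
    ∑ i ∈ range (2*n + (2*n + 3)), lamF g n i * LL g n r0 i p y
      = Fa g n r0 p + (y - p) * Wa g n p := by
  rw [sum_split]
  have h1 : ∀ i ∈ range (2*n), lamF g n i * LL g n r0 i p y
      = aa n * lamP g n i * (-|p - vv g n i| + (y - p) * (-(signS 1 (p - vv g n i)))) := by
    intro i hi
    have hi2 := Finset.mem_range.mp hi
    rw [lamF_lo g n hi2, LL_lo g n r0 hi2, vloss_decomp]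
  have h2 : ∀ i ∈ range (2*n), lamF g n (2*n + i) * LL g n r0 (2*n + i) p y
      = aa n * lamM g n i * (-|p - vv g n i| + (y - p) * (-(signS (-1) (p - vv g n i)))) := by
    intro i hi
    have hi2 := Finset.mem_range.mp hi
    rw [lamF_mid g n hi2, LL_mid g n r0 hi2, vloss_decomp]
  have h3 : lamF g n (2*n + (2*n + 0)) * LL g n r0 (2*n + (2*n + 0)) p y
      = aa n * alC g * (-(1 - p) + (y - p) * 1) := by
    rw [lamF_a, LL_a, vloss_one p y hp.2]
  have h4 : lamF g n (2*n + (2*n + 1)) * LL g n r0 (2*n + (2*n + 1)) p y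
      = aa n * beC g * (-p + (y - p) * (-1)) := by
    rw [lamF_b, LL_b, vloss_zero p y hp.1]
  have h5 : lamF g n (2*n + (2*n + 2)) * LL g n r0 (2*n + (2*n + 2)) p y
      = lamC g n * Cc g n r0 := by
    rw [lamF_c, LL_c]
  rw [Finset.sum_congr rfl h1, Finset.sum_congr rfl h2, h3, h4, h5]
  have hsum : (∑ i ∈ range (2*n),
        aa n * lamP g n i * (-|p - vv g n i| + (y - p) * (-(signS 1 (p - vv g n i)))))
      + (∑ i ∈ range (2*n),
        aa n * lamM g n i * (-|p - vv g n i| + (y - p) * (-(signS (-1) (p - vv g n i)))))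
      = aa n * (∑ i ∈ range (2*n), (ff g n (i+1) - ff g n i) * (-|p - vv g n i|))
        + (y - p) * (aa n * ∑ i ∈ range (2*n),
          (lamP g n i * (-(signS 1 (p - vv g n i))) + lamM g n i * (-(signS (-1) (p - vv g n i))))) := by
    rw [Finset.mul_sum, Finset.mul_sum, Finset.mul_sum, ← Finset.sum_add_distrib,
      ← Finset.sum_add_distrib]
    refine Finset.sum_congr rfl (fun i _ => ?_)
    unfold lamM
    ring
  have hgoal : ∀ a b c d e : ℝ, a + b = c → a + b + d + e = c + d + e := by
    intro a b c d e h; linarith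
  unfold Fa FaIn Wa WaIn
  rw [← alC_sub_beC g]
  linarith [hsum]


end Main
end VA

/-- every loss in `L*` is uniformly approximated by finite convex
combinations of V-shaped losses and constants. -/
theorem Lstar_approx_by_vshaped (ℓ : ℝ → ℝ → ℝ) (hℓ : Lstar ℓ) (ε : ℝ) (hε : 0 < ε) :
    ∃ (k : ℕ) (L : Fin k → (ℝ → ℝ → ℝ)) (lam : Fin k → ℝ),
      (∀ i, L i ∈ L0) ∧ (∀ i, 0 ≤ lam i) ∧ (∑ i, lam i = 1) ∧
      ∀ p ∈ Icc (0:ℝ) 1, ∀ y ∈ ({0, 1} : Set ℝ),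
        |ℓ p y - ∑ i, lam i * L i p y| ≤ ε := by
  classical
  obtain ⟨hprop, hb⟩ := hℓ
  set g : ℝ → ℝ := fun p => ℓ p 1 - ℓ p 0 with hg
  set R : ℝ → ℝ := fun p => elos ℓ p p with hR
  have hA : ∀ p ∈ Icc (0:ℝ) 1, ∀ q ∈ Icc (0:ℝ) 1, R q ≤ R p + (q - p) * g p := by
    intro p hp q hq
    have h := hprop p hp q hq
    have hid : elos ℓ p q = elos ℓ p p + (q - p) * (ℓ p 1 - ℓ p 0) := by
      unfold elos; ring
    show elos ℓ q q ≤ elos ℓ p p + (q - p) * (ℓ p 1 - ℓ p 0)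
    linarith
  have hga : ∀ p ∈ Icc (0:ℝ) 1, ∀ q ∈ Icc (0:ℝ) 1, p ≤ q → g q ≤ g p := by
    intro p hp q hq hpq
    rcases eq_or_lt_of_le hpq with h|h
    · rw [← h]
    · have h1 := hA p hp q hq
      have h2 := hA q hq p hp
      nlinarith
  have hgb : ∀ p ∈ Icc (0:ℝ) 1, |g p| ≤ 1 := hb
  obtain ⟨n, hn6⟩ := exists_nat_gt (6/ε)
  have hε6 : (0:ℝ) < 6/ε := by positivity
  have hn1 : 1 ≤ n := by
    have h1 : (0:ℝ) < n := lt_trans hε6 hn6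
    have h2 : 0 < n := by exact_mod_cast h1
    omega
  have hnpos : (0:ℝ) < n := lt_trans hε6 hn6
  have h6n : 6/(n:ℝ) ≤ ε := by
    rw [div_le_iff₀ hnpos]
    rw [div_lt_iff₀ hε] at hn6
    nlinarith
  refine ⟨2*n + (2*n + 3), fun i => VA.LL g n (R 0) i.val, fun i => VA.lamF g n i.val,
    ?_, ?_, ?_, ?_⟩
  · intro i
    show VA.LL g n (R 0) i.val ∈ L0
    unfold VA.LL
    split_ifs with h1 h2 h3 h4
    · exact Or.inl ⟨VA.vv g n i.val, VA.vv_mem g n hn1 i.val, Or.inl rfl⟩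
    · exact Or.inl ⟨VA.vv g n (i.val - 2*n), VA.vv_mem g n hn1 _, Or.inr rfl⟩
    · exact Or.inl ⟨1, VA.mem11, Or.inr rfl⟩
    · exact Or.inl ⟨0, VA.mem01, Or.inl rfl⟩
    · exact Or.inr ⟨VA.Cc g n (R 0), rfl⟩
  · intro i
    show 0 ≤ VA.lamF g n i.val
    unfold VA.lamF
    have haa := VA.aa_nonneg n hn1
    split_ifs with h1 h2 h3 h4
    · exact mul_nonneg haa (VA.lamP_nonneg g n _)
    · exact mul_nonneg haa (VA.lamM_nonneg g n _)
    · exact mul_nonneg haa (VA.alC_nonneg g)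
    · exact mul_nonneg haa (VA.beC_nonneg g)
    · exact VA.lamC_nonneg g n hga hgb hn1
  · show ∑ i : Fin (2*n + (2*n + 3)), VA.lamF g n i.val = 1
    rw [Fin.sum_univ_eq_sum_range (fun j => VA.lamF g n j)]
    exact VA.lamF_sum g n hga hgb hn1
  · intro p hp y hy
    have hrw : ∑ i : Fin (2*n + (2*n + 3)), VA.lamF g n i.val * VA.LL g n (R 0) i.val p y
        = VA.Fa g n (R 0) p + (y - p) * VA.Wa g n p := by
      rw [Fin.sum_univ_eq_sum_range (fun j => VA.lamF g n j * VA.LL g n (R 0) j p y)]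
      exact VA.sum_eq g n hga hgb hn1 (R 0) hp y
    rw [show (∑ i : Fin (2*n + (2*n + 3)), (fun i : Fin (2*n + (2*n+3)) => VA.lamF g n i.val) i * (fun i : Fin (2*n + (2*n+3)) => VA.LL g n (R 0) i.val) i p y) = VA.Fa g n (R 0) p + (y - p) * VA.Wa g n p from hrw]
    have hdec : ℓ p y = R p + (y - p) * g p := by
      have hy2 : y = 0 ∨ y = 1 := by simpa using hy
      show ℓ p y = elos ℓ p p + (y - p) * (ℓ p 1 - ℓ p 0)
      rcases hy2 with h|h <;> subst h <;> (unfold elos; ring)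
    rw [hdec]
    have hW := VA.Wa_close g n hga hgb hn1 hp
    have hF := VA.R_Fa_close g n hga hgb R hA hn1 hp
    have hyp : |y - p| ≤ 1 := by
      have hy2 : y = 0 ∨ y = 1 := by simpa using hy
      rw [abs_le]
      rcases hy2 with h|h <;> subst h <;> constructor <;> linarith [hp.1, hp.2]
    have hkey : R p + (y - p) * g p - (VA.Fa g n (R 0) p + (y - p) * VA.Wa g n p)
        = (R p - VA.Fa g n (R 0) p) + (y - p) * (g p - VA.Wa g n p) := by ring
    rw [hkey]
    calc |(R p - VA.Fa g n (R 0) p) + (y - p) * (g p - VA.Wa g n p)|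
        ≤ |R p - VA.Fa g n (R 0) p| + |(y - p) * (g p - VA.Wa g n p)| := abs_add_le _ _
      _ = |R p - VA.Fa g n (R 0) p| + |y - p| * |g p - VA.Wa g n p| := by rw [abs_mul]
      _ ≤ 4/(n:ℝ) + 1 * (2/(n:ℝ)) := by
          refine add_le_add hF ?_
          exact mul_le_mul hyp hW (abs_nonneg _) (by norm_num)
      _ ≤ ε := by
          have : 4/(n:ℝ) + 1 * (2/(n:ℝ)) = 6/(n:ℝ) := by ring
          linarith
end
end

section
/- (Decision OI.) For every ℓ ∈ L*, every p, q ∈ [0,1], and every y ∈ {0,1}: ℓ(p, y) − ℓ(q, y) ≤ (∂ℓ(p) − ∂ℓ(q))·(y − p). -/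
open MeasureTheory Set

noncomputable section

/-! For an outcome `y ∈ {0,1}`, the loss `ℓ(p,y)` is the expected loss `ℓ(p,p)` plus the linear
correction `∂ℓ(p)·(y − p)`. Subtracting the same decomposition of `ℓ(q,y)` around `p` leaves
`ℓ(p,p) − ℓ(q,p) + (∂ℓ(p) − ∂ℓ(q))·(y − p)`, and properness makes the first difference nonpositive. -/

theorem elos_eq_elos_add (ℓ : ℝ → ℝ → ℝ) (p q r : ℝ) :
    elos ℓ p q = elos ℓ p r + (ℓ p 1 - ℓ p 0) * (q - r) := by
  unfold elos
  ring

theorem elos_of_mem_zero_one (ℓ : ℝ → ℝ → ℝ) (p : ℝ) {y : ℝ} (hy : y ∈ ({0, 1} : Set ℝ)) :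
    elos ℓ p y = ℓ p y := by
  rcases hy with rfl | rfl <;> simp [elos]

/-- Decision OI: for proper losses,
`ℓ(p,y) − ℓ(q,y) ≤ (∂ℓ(p) − ∂ℓ(q))·(y − p)` where `∂ℓ(p) = ℓ(p,1) − ℓ(p,0)`. -/
theorem decision_OI (ℓ : ℝ → ℝ → ℝ) (hℓ : Lstar ℓ)
    (p q : ℝ) (hp : p ∈ Icc (0:ℝ) 1) (hq : q ∈ Icc (0:ℝ) 1)
    (y : ℝ) (hy : y ∈ ({0, 1} : Set ℝ)) :
    ℓ p y - ℓ q y ≤ ((ℓ p 1 - ℓ p 0) - (ℓ q 1 - ℓ q 0)) * (y - p) := by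
  have hproper : elos ℓ p p ≤ elos ℓ q p := hℓ.1 q hq p hp
  calc ℓ p y - ℓ q y
      = (elos ℓ p p - elos ℓ q p) + ((ℓ p 1 - ℓ p 0) - (ℓ q 1 - ℓ q 0)) * (y - p) := by
        rw [← elos_of_mem_zero_one ℓ p hy, ← elos_of_mem_zero_one ℓ q hy,
          elos_eq_elos_add ℓ p y p, elos_eq_elos_add ℓ q y p]
        ring
    _ ≤ ((ℓ p 1 - ℓ p 0) - (ℓ q 1 - ℓ q 0)) * (y - p) := by linarith
end
end

section
/- There exists an absolute constant C > 0 such that for every probability distribution J on [0,1] × {0,1}, every valid post-processing class K, every κ ∈ K, and every v ∈ [0,1]: E_{(p,y)~J}[ 1[κ(p) ≥ v]·(y − p) ] ≤ C·√(CDL_K(J)). (The expectation on the left may be negative with arbitrarily large magnitude; only its positive part is bounded.) -/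
open MeasureTheory Set

noncomputable section

/-!
Write `w = 1[v ≤ κ]`. The V-shaped loss `vloss u 1` together with the post-processing
`proj01 (κ' p + (u - v))` shows `E[(1[v ≤ κ' p] - 1[u ≤ p]) (y - u)] ≤ CDL / 2` for every
`κ' ∈ K`. For `κ' = id` this bounds `E[1[a ≤ p < b] (y - b)]`; for `κ' = κ ∘ clamp_[α, β]`, with
`κ α < v ≤ κ β`, it bounds `E[(w p 1[α ≤ p ≤ β] + 1[β < p < u]) (y - u)]`.

Cut `[0, 1)` into `n` windows of width `1 / n`. In a window `[s, t)` take `α` near the first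
point with `w = 0` and `β` near the last point after it with `w = 1`, "near" meaning up to a set of
mass `< τ` (continuity of the law of `p` from the right and from the left). On `[s, α)` the weight
is `1` off that set and the first bound applies; on `[α, t)` the clamped post-processing reproduces
`w` and the second applies. Each window thus contributes `≤ CDL + (t - s) P[s, t)`, so
`E[w p (y - p)] ≤ n CDL + 1 / n`, and `n ≈ CDL^(-1/2)` gives `4 √CDL`.
-/

open Filter Topology

lemma proj01_mem (x : ℝ) : proj01 x ∈ Icc (0:ℝ) 1 :=
  ⟨le_max_left _ _, max_le zero_le_one (min_le_left _ _)⟩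

lemma proj01_of_mem {x : ℝ} (h : x ∈ Icc (0:ℝ) 1) : proj01 x = x := by
  simp [proj01, h.1, h.2]

lemma le_proj01_iff {b x : ℝ} (hb0 : 0 < b) (hb1 : b ≤ 1) : b ≤ proj01 x ↔ b ≤ x := by
  simp only [proj01, le_max_iff, le_min_iff]
  constructor
  · rintro (h | ⟨-, h⟩) <;> linarith
  · exact fun h => Or.inr ⟨hb1, h⟩

lemma proj01_proj01_sub_add {x α : ℝ} (hx : x ∈ Icc (0:ℝ) 1) (hα : α ∈ Icc (0:ℝ) 1) :
    proj01 (proj01 (x + -α) + α) = max α x := by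
  obtain ⟨hx0, hx1⟩ := hx
  obtain ⟨hα0, hα1⟩ := hα
  simp only [proj01, max_def, min_def]
  split_ifs <;> linarith

lemma proj01_proj01_add_sub {x β : ℝ} (hx : x ∈ Icc (0:ℝ) 1) (hβ : β ∈ Icc (0:ℝ) 1) :
    proj01 (proj01 (x + (1 - β)) + (β - 1)) = min β x := by
  obtain ⟨hx0, hx1⟩ := hx
  obtain ⟨hβ0, hβ1⟩ := hβ
  simp only [proj01, max_def, min_def]
  split_ifs <;> linarith

lemma signS_one_sub (u x : ℝ) : signS 1 (x - u) = 2 * (Ici u).indicator 1 x - 1 := by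
  simp only [signS, Set.indicator_apply, mem_Ici, Pi.one_apply]
  split_ifs <;> (try norm_num) <;> linarith

lemma vloss_sub_vloss (u p q y : ℝ) :
    vloss u 1 p y - vloss u 1 q y
      = 2 * ((Ici u).indicator 1 q - (Ici u).indicator 1 p) * (y - u) := by
  simp only [vloss, signS_one_sub]
  ring

lemma lstar_vloss (u : ℝ) : Lstar (vloss u 1) := by
  refine ⟨fun p _ q _ => ?_, fun p _ => ?_⟩
  · simp only [elos, vloss, signS_one_sub]
    by_cases hp : u ≤ p <;> by_cases hq : u ≤ q <;>
      simp only [Set.indicator_apply, mem_Ici, hp, hq, if_true, if_false, Pi.one_apply] <;>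
      nlinarith
  · have : vloss u 1 p 1 - vloss u 1 p 0 = -signS 1 (p - u) := by simp only [vloss]; ring
    rw [this, abs_neg]
    unfold signS
    split_ifs <;> norm_num

lemma Lstar.elos_sub_elos_self_le {ℓ : ℝ → ℝ → ℝ} (hl : Lstar ℓ) {p q : ℝ}
    (hp : p ∈ Icc (0:ℝ) 1) (hq : q ∈ Icc (0:ℝ) 1) : elos ℓ p q - elos ℓ q q ≤ 2 * |p - q| := by
  have hmul : ∀ a b : ℝ, |b| ≤ 1 → a * b ≤ |a| := fun a b hb =>
    (le_abs_self _).trans (by rw [abs_mul]; exact mul_le_of_le_one_right (abs_nonneg _) hb)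
  have h1 := hmul (q - p) _ (hl.2 p hp)
  have h2 := hmul (p - q) _ (hl.2 q hq)
  have hproper := hl.1 q hq p hp
  rw [abs_sub_comm] at h1
  simp only [elos] at hproper ⊢
  linarith

lemma Lstar.sub_le_two {ℓ : ℝ → ℝ → ℝ} (hl : Lstar ℓ) {p q y : ℝ}
    (hp : p ∈ Icc (0:ℝ) 1) (hq : q ∈ Icc (0:ℝ) 1) (hy : y = 0 ∨ y = 1) : ℓ p y - ℓ q y ≤ 2 := by
  have hy' : y ∈ Icc (0:ℝ) 1 := by rcases hy with rfl | rfl <;> norm_num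
  have hℓ : ∀ x, ℓ x y = elos ℓ x y := fun x => by rcases hy with rfl | rfl <;> simp [elos]
  have h1 := hl.elos_sub_elos_self_le hp hy'
  have h2 := hl.1 q hq y hy'
  have h3 : |p - y| ≤ 1 := abs_sub_le_iff.2 ⟨by linarith [hp.2, hy'.1], by linarith [hp.1, hy'.2]⟩
  rw [hℓ, hℓ]
  linarith

variable {J : Measure (ℝ × ℝ)} {K : Set (ℝ → ℝ)}

lemma integral_regret_le_two (hJ : IsPredDist J) (hK : ValidClass K) {ℓ : ℝ → ℝ → ℝ}
    {κ : ℝ → ℝ} (hl : Lstar ℓ) (hκ : κ ∈ K) : ∫ z, (ℓ z.1 z.2 - ℓ (κ z.1) z.2) ∂J ≤ 2 := by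
  have := hJ.1
  by_cases hint : Integrable (fun z : ℝ × ℝ => ℓ z.1 z.2 - ℓ (κ z.1) z.2) J
  · calc ∫ z, (ℓ z.1 z.2 - ℓ (κ z.1) z.2) ∂J ≤ ∫ _, (2 : ℝ) ∂J := by
          refine integral_mono_ae hint (integrable_const 2) ?_
          filter_upwards [hJ.2] with z hz
          exact hl.sub_le_two hz.1 (hK.1 κ hκ z.1 hz.1) hz.2
      _ = 2 := by simp
  · rw [integral_undef hint]; norm_num

lemma le_CDL (hJ : IsPredDist J) (hK : ValidClass K) {ℓ : ℝ → ℝ → ℝ} {κ : ℝ → ℝ}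
    (hl : Lstar ℓ) (hκ : κ ∈ K) : ∫ z, (ℓ z.1 z.2 - ℓ (κ z.1) z.2) ∂J ≤ CDL K J := by
  refine le_csSup ⟨2, ?_⟩ ⟨ℓ, κ, hl, hκ, rfl⟩
  rintro _ ⟨ℓ', κ', hl', hκ', rfl⟩
  exact integral_regret_le_two hJ hK hl' hκ'

lemma lstar_zero : Lstar (fun _ _ => 0) :=
  ⟨fun _ _ _ _ => by simp [elos], fun _ _ => by simp⟩

lemma CDL_nonneg (hJ : IsPredDist J) (hK : ValidClass K) : 0 ≤ CDL K J := by
  simpa using le_CDL hJ hK lstar_zero hK.2.1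

lemma CDL_le_two (hJ : IsPredDist J) (hK : ValidClass K) : CDL K J ≤ 2 := by
  refine csSup_le ⟨_, _, _, lstar_zero, hK.2.1, rfl⟩ ?_
  rintro _ ⟨ℓ, κ, hl, hκ, rfl⟩
  exact integral_regret_le_two hJ hK hl hκ

lemma ValidClass.comp_proj01_add_mem (hK : ValidClass K) {κ : ℝ → ℝ} (hκ : κ ∈ K) (s : ℝ) :
    (fun p => κ (proj01 (p + s))) ∈ K := by
  convert hK.2.2 s 0 κ hκ using 2 with p
  rw [add_zero, proj01_of_mem (hK.1 κ hκ _ (proj01_mem _))]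

lemma ValidClass.exists_eqOn_clamp (hK : ValidClass K) {κ : ℝ → ℝ} (hκ : κ ∈ K) {α β : ℝ}
    (hα : α ∈ Icc (0:ℝ) 1) (hβ : β ∈ Icc (0:ℝ) 1) :
    ∃ κ' ∈ K, EqOn κ' (fun p => κ (max α (min β p))) (Icc 0 1) := by
  refine ⟨_, hK.comp_proj01_add_mem (hK.comp_proj01_add_mem (hK.comp_proj01_add_mem
    (hK.comp_proj01_add_mem hκ α) (-α)) (β - 1)) (1 - β), fun p hp => ?_⟩
  have hmin : min β p ∈ Icc (0:ℝ) 1 := ⟨le_min hβ.1 hp.1, min_le_of_left_le hβ.2⟩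
  simp only
  rw [proj01_proj01_add_sub hp hβ, proj01_proj01_sub_add hmin hα]

/-- Witnessed by the V-shaped loss `vloss u 1` and the post-processing `proj01 (κ p + (u - v))`. -/
lemma integral_indicator_sub_indicator_mul_le_CDL (hJ : IsPredDist J) (hK : ValidClass K)
    {κ : ℝ → ℝ} (hκ : κ ∈ K) (v : ℝ) {u : ℝ} (hu0 : 0 < u) (hu1 : u ≤ 1) :
    ∫ z, ({p | v ≤ κ p}.indicator 1 z.1 - (Ici u).indicator 1 z.1) * (z.2 - u) ∂J
      ≤ CDL K J / 2 := by
  have hκ' := hK.2.2 0 (u - v) κ hκ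
  have key := le_CDL hJ hK (lstar_vloss u) hκ'
  suffices h : ∫ z, (vloss u 1 z.1 z.2 - vloss u 1 (proj01 (κ (proj01 (z.1 + 0)) + (u - v))) z.2) ∂J
      = 2 * ∫ z, ({p | v ≤ κ p}.indicator 1 z.1 - (Ici u).indicator 1 z.1) * (z.2 - u) ∂J by
    linarith
  rw [← integral_const_mul]
  refine integral_congr_ae ?_
  filter_upwards [hJ.2] with z hz
  have hthr : (Ici u).indicator (1 : ℝ → ℝ) (proj01 (κ (proj01 (z.1 + 0)) + (u - v)))
      = {p | v ≤ κ p}.indicator 1 z.1 := by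
    rw [add_zero, proj01_of_mem hz.1]
    have hiff : u ≤ κ z.1 + (u - v) ↔ v ≤ κ z.1 := by constructor <;> intro <;> linarith
    simp only [Set.indicator_apply, mem_Ici, mem_ofPred_eq, le_proj01_iff hu0 hu1, hiff,
      Pi.one_apply]
  rw [vloss_sub_vloss, hthr]
  ring

lemma integral_indicator_Ico_mul_le_CDL (hJ : IsPredDist J) (hK : ValidClass K) {a b : ℝ}
    (ha : 0 ≤ a) (hb : b ≤ 1) : ∫ z, (Ico a b).indicator 1 z.1 * (z.2 - b) ∂J ≤ CDL K J / 2 := by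
  rcases le_or_gt b a with hab | hab
  · have := CDL_nonneg hJ hK
    simp only [Ico_eq_empty_of_le hab, indicator_empty, zero_mul, integral_zero]
    linarith
  have hdiff : ∀ x, (Ico a b).indicator (1 : ℝ → ℝ) x
      = {p | a ≤ p}.indicator 1 x - (Ici b).indicator 1 x := fun x => by
    simp only [Set.indicator_apply, mem_Ico, mem_Ici, mem_ofPred_eq, Pi.one_apply]
    split_ifs <;> simp_all <;> linarith
  simpa only [hdiff] using
    integral_indicator_sub_indicator_mul_le_CDL hJ hK hK.2.1 a (ha.trans_lt hab) hb

lemma exists_gt_measureReal_Ioo_lt (μ : Measure ℝ) [IsFiniteMeasure μ] (x : ℝ) {τ : ℝ}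
    (hτ : 0 < τ) : ∃ c > x, μ.real (Ioo x c) < τ := by
  have hlim : Tendsto (fun c => μ (Ioo x c)) (𝓝[>] x) (𝓝 (μ (⋂ c > x, Ioo x c))) :=
    tendsto_measure_biInter_gt (fun _ _ => measurableSet_Ioo.nullMeasurableSet)
      (fun _ _ _ hij => Ioo_subset_Ioo_right hij) ⟨x + 1, by linarith, measure_ne_top _ _⟩
  have hempty : (⋂ c > x, Ioo x c) = ∅ :=
    eq_empty_of_forall_notMem fun y hy => by
      have hxy := (mem_iInter₂.1 hy (x + 1) (by linarith)).1
      exact lt_irrefl y (mem_iInter₂.1 hy y hxy).2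
  rw [hempty, measure_empty] at hlim
  obtain ⟨c, hc, hcx⟩ := ((hlim.eventually (gt_mem_nhds (ENNReal.ofReal_pos.2 hτ))).and
    self_mem_nhdsWithin).exists
  exact ⟨c, hcx, ENNReal.toReal_lt_of_lt_ofReal hc⟩

lemma exists_lt_measureReal_Ioo_lt (μ : Measure ℝ) [IsFiniteMeasure μ] (x : ℝ) {τ : ℝ}
    (hτ : 0 < τ) : ∃ c < x, μ.real (Ioo c x) < τ := by
  obtain ⟨c, hc, hμ⟩ := exists_gt_measureReal_Ioo_lt (μ.map Neg.neg) (-x) hτ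
  refine ⟨-c, by linarith, ?_⟩
  rwa [map_measureReal_apply measurable_neg measurableSet_Ioo, Set.neg_preimage, Set.neg_Ioo,
    neg_neg] at hμ

lemma exists_mem_measureReal_Ioo_csInf_lt (μ : Measure ℝ) [IsFiniteMeasure μ] {S : Set ℝ}
    (hS : S.Nonempty) (hb : BddBelow S) {τ : ℝ} (hτ : 0 < τ) :
    ∃ a ∈ S, μ.real (Ioo (sInf S) a) < τ ∧ ∀ x ∈ S, x < a → sInf S < x := by
  by_cases hmem : sInf S ∈ S
  · exact ⟨sInf S, hmem, by simpa using hτ,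
      fun x hx hlt => absurd (csInf_le hb hx) (not_le.2 hlt)⟩
  · obtain ⟨c, hc, hμ⟩ := exists_gt_measureReal_Ioo_lt μ (sInf S) hτ
    obtain ⟨a, ha, hac⟩ := exists_lt_of_csInf_lt hS hc
    exact ⟨a, ha, (measureReal_mono (Ioo_subset_Ioo_right hac.le)).trans_lt hμ,
      fun x hx _ => (csInf_le hb hx).lt_of_ne fun h => hmem (h ▸ hx)⟩

lemma exists_mem_measureReal_Ioo_csSup_lt (μ : Measure ℝ) [IsFiniteMeasure μ] {S : Set ℝ}
    (hS : S.Nonempty) (hb : BddAbove S) {τ : ℝ} (hτ : 0 < τ) :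
    ∃ b ∈ S, μ.real (Ioo b (sSup S)) < τ ∧ ∀ x ∈ S, b < x → x < sSup S := by
  by_cases hmem : sSup S ∈ S
  · exact ⟨sSup S, hmem, by simpa using hτ,
      fun x hx hlt => absurd (le_csSup hb hx) (not_le.2 hlt)⟩
  · obtain ⟨c, hc, hμ⟩ := exists_lt_measureReal_Ioo_lt μ (sSup S) hτ
    obtain ⟨b, hb', hcb⟩ := exists_lt_of_lt_csSup hS hc
    exact ⟨b, hb', (measureReal_mono (Ioo_subset_Ioo_left hcb.le)).trans_lt hμ,
      fun x hx _ => (le_csSup hb hx).lt_of_ne fun h => hmem (h ▸ hx)⟩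

lemma integral_indicator_one_fst {S : Set ℝ} (hS : MeasurableSet S) :
    ∫ z, S.indicator 1 z.1 ∂J = (J.map Prod.fst).real S := by
  rw [map_measureReal_apply measurable_fst hS, ← integral_indicator_one (measurable_fst hS)]
  rfl

/-- Since `κ` is arbitrary, measurability of the weight must come from that of `f p * (y - p)`:
divide by `y - p`, which vanishes only at the atoms `p ∈ {0, 1}`. -/
lemma aestronglyMeasurable_fst_of_mul_sub (hJ : IsPredDist J) {f : ℝ → ℝ}
    (h : AEStronglyMeasurable (fun z : ℝ × ℝ => f z.1 * (z.2 - z.1)) J) :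
    AEStronglyMeasurable (fun z : ℝ × ℝ => f z.1) J := by
  obtain ⟨g, hg, hfg⟩ := h
  refine ⟨fun z => if z.1 = 0 then f 0 else if z.1 = 1 then f 1 else g z / (z.2 - z.1), ?_, ?_⟩
  · exact (Measurable.ite (measurable_fst (measurableSet_singleton 0)) measurable_const
      (Measurable.ite (measurable_fst (measurableSet_singleton 1)) measurable_const
        (hg.measurable.div (measurable_snd.sub measurable_fst)))).stronglyMeasurable
  · filter_upwards [hfg, hJ.2] with z hz hzJ
    obtain ⟨-, hy⟩ := hzJ
    by_cases h0 : z.1 = 0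
    · simp [h0]
    by_cases h1 : z.1 = 1
    · simp [h1]
    have hne : z.2 - z.1 ≠ 0 := by
      rcases hy with h | h <;> rw [h] <;> intro h'
      · exact h0 (by linarith)
      · exact h1 (by linarith)
    simp only [h0, h1, if_false, ← hz, mul_div_cancel_right₀ _ hne]

lemma abs_indicator_one_le (S : Set ℝ) (x : ℝ) : |S.indicator (1 : ℝ → ℝ) x| ≤ 1 := by
  by_cases h : x ∈ S <;> simp [h]

lemma integrable_snd_sub (hJ : IsPredDist J) (c : ℝ) : Integrable (fun z : ℝ × ℝ => z.2 - c) J := by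
  have := hJ.1
  refine (Integrable.of_mem_Icc 0 1 measurable_snd.aemeasurable ?_).sub (integrable_const c)
  filter_upwards [hJ.2] with z hz
  rcases hz.2 with h | h <;> simp [h]

lemma integrable_snd_sub_fst (hJ : IsPredDist J) :
    Integrable (fun z : ℝ × ℝ => z.2 - z.1) J := by
  have := hJ.1
  refine (Integrable.of_mem_Icc 0 1 measurable_snd.aemeasurable ?_).sub
    (Integrable.of_mem_Icc 0 1 measurable_fst.aemeasurable ?_)
  · filter_upwards [hJ.2] with z hz
    rcases hz.2 with h | h <;> simp [h]
  · filter_upwards [hJ.2] with z hz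
    exact hz.1

lemma integrable_indicator_one_fst (hJ : IsPredDist J) {S : Set ℝ} (hS : MeasurableSet S) :
    Integrable (fun z : ℝ × ℝ => S.indicator (1 : ℝ → ℝ) z.1) J := by
  have := hJ.1
  exact .of_bound ((measurable_const.indicator hS).comp measurable_fst).aestronglyMeasurable 1
    (Eventually.of_forall fun z => abs_indicator_one_le S z.1)

lemma sum_indicator_Ico_div {n : ℕ} (hn : 0 < n) (x : ℝ) :
    ∑ j ∈ Finset.range n, (Ico ((j : ℝ) / n) ((j + 1) / n)).indicator (1 : ℝ → ℝ) x
      = (Ico 0 1).indicator 1 x := by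
  have hn' : (0 : ℝ) < n := Nat.cast_pos.2 hn
  rcases lt_or_ge x 0 with hx | hx
  · rw [indicator_of_notMem fun h => hx.not_ge h.1]
    exact Finset.sum_eq_zero fun j _ =>
      indicator_of_notMem (fun h => hx.not_ge ((div_nonneg j.cast_nonneg hn'.le).trans h.1)) _
  have hmem : ∀ j : ℕ, x ∈ Ico ((j : ℝ) / n) ((j + 1) / n) ↔ ⌊x * n⌋₊ = j := fun j => by
    rw [Nat.floor_eq_iff (mul_nonneg hx hn'.le), mem_Ico, div_le_iff₀ hn', lt_div_iff₀ hn']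
  simp only [indicator_apply, hmem, Pi.one_apply, Finset.sum_ite_eq, Finset.mem_range,
    Nat.floor_lt (mul_nonneg hx hn'.le), mul_lt_iff_lt_one_left hn', mem_Ico, hx, true_and]

section Blocks

variable {κ : ℝ → ℝ} {v : ℝ}

lemma integrable_indicator_mul_indicator_Ico_mul (hJ : IsPredDist J)
    (hw : AEStronglyMeasurable (fun z : ℝ × ℝ => {p | v ≤ κ p}.indicator (1 : ℝ → ℝ) z.1) J)
    (a b : ℝ) : Integrable (fun z : ℝ × ℝ =>
      {p | v ≤ κ p}.indicator 1 z.1 * (Ico a b).indicator 1 z.1 * (z.2 - z.1)) J :=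
  (integrable_snd_sub_fst hJ).bdd_mul (hw.mul (integrable_indicator_one_fst hJ measurableSet_Ico).1)
    (Eventually.of_forall fun z => by
      rw [norm_mul]
      exact mul_le_one₀ (abs_indicator_one_le _ _) (norm_nonneg _) (abs_indicator_one_le _ _))

lemma indicator_mul_indicator_Ico_mul_le_of_ones {s α p y : ℝ} {E : Set ℝ} (hp : p ≤ 1)
    (hy : 0 ≤ y) (hzero : ∀ x ∈ Ico s α, κ x < v → x ∈ E) :
    {x | v ≤ κ x}.indicator 1 p * (Ico s α).indicator 1 p * (y - p)
      ≤ (Ico s α).indicator 1 p * (y - α) + (α - s) * (Ico s α).indicator 1 p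
        + E.indicator 1 p := by
  have hE0 : 0 ≤ E.indicator (1 : ℝ → ℝ) p := indicator_nonneg (fun _ _ => zero_le_one) _
  by_cases hI : p ∈ Ico s α
  · by_cases hw : v ≤ κ p
    · simp only [indicator_of_mem hI, indicator_of_mem (show p ∈ {x | v ≤ κ x} from hw),
        Pi.one_apply]
      linarith [hI.1]
    · simp only [indicator_of_mem hI, indicator_of_mem (hzero _ hI (not_le.1 hw)),
        indicator_of_notMem (show p ∉ {x | v ≤ κ x} from hw), Pi.one_apply]
      linarith [hI.1]
  · simp only [indicator_of_notMem hI]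
    linarith

lemma integral_window_le_of_ones (hJ : IsPredDist J) (hK : ValidClass K)
    (hw : AEStronglyMeasurable (fun z : ℝ × ℝ => {p | v ≤ κ p}.indicator (1 : ℝ → ℝ) z.1) J)
    {s α : ℝ} {E : Set ℝ} (hs : 0 ≤ s) (hα : α ≤ 1) (hE : MeasurableSet E)
    (hzero : ∀ x ∈ Ico s α, κ x < v → x ∈ E) :
    ∫ z, {p | v ≤ κ p}.indicator 1 z.1 * (Ico s α).indicator 1 z.1 * (z.2 - z.1) ∂J
      ≤ CDL K J / 2 + (α - s) * ∫ z, (Ico s α).indicator 1 z.1 ∂J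
        + ∫ z, E.indicator 1 z.1 ∂J := by
  have hI := integrable_indicator_one_fst hJ (measurableSet_Ico (a := s) (b := α))
  have hIE := integrable_indicator_one_fst hJ hE
  have hIy : Integrable (fun z : ℝ × ℝ => (Ico s α).indicator 1 z.1 * (z.2 - α)) J :=
    (integrable_snd_sub hJ α).bdd_mul hI.1 (Eventually.of_forall fun z => abs_indicator_one_le _ _)
  have hIyI : Integrable (fun z : ℝ × ℝ => (Ico s α).indicator 1 z.1 * (z.2 - α)
      + (α - s) * (Ico s α).indicator 1 z.1) J := hIy.add (hI.const_mul _)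
  calc _ ≤ ∫ z, ((Ico s α).indicator 1 z.1 * (z.2 - α) + (α - s) * (Ico s α).indicator 1 z.1
          + E.indicator 1 z.1) ∂J := by
        refine integral_mono_ae (integrable_indicator_mul_indicator_Ico_mul hJ hw s α)
          (hIyI.add hIE) ?_
        filter_upwards [hJ.2] with z hz
        exact indicator_mul_indicator_Ico_mul_le_of_ones hz.1.2
          (by rcases hz.2 with h | h <;> simp [h]) hzero
    _ = ∫ z, (Ico s α).indicator 1 z.1 * (z.2 - α) ∂J
          + (α - s) * ∫ z, (Ico s α).indicator 1 z.1 ∂J + ∫ z, E.indicator 1 z.1 ∂J := by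
        rw [integral_add hIyI hIE, integral_add hIy (hI.const_mul _), integral_const_mul]
    _ ≤ _ := by linarith [integral_indicator_Ico_mul_le_CDL (K := K) hJ hK hs hα]

lemma integral_clamp_regret_le_CDL (hJ : IsPredDist J) (hK : ValidClass K) (hκ : κ ∈ K)
    {α β u : ℝ} (hα : 0 ≤ α) (hαβ : α ≤ β) (hβu : β < u) (hu : u ≤ 1) (hκα : κ α < v)
    (hκβ : v ≤ κ β) :
    ∫ z, ({p | v ≤ κ p}.indicator 1 z.1 * (Icc α β).indicator 1 z.1
      + (Ioo β u).indicator 1 z.1) * (z.2 - u) ∂J ≤ CDL K J / 2 := by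
  obtain ⟨κ', hκ', hclamp⟩ :=
    hK.exists_eqOn_clamp hκ ⟨hα, by linarith⟩ ⟨hα.trans hαβ, by linarith⟩
  refine le_of_eq_of_le (integral_congr_ae ?_)
    (integral_indicator_sub_indicator_mul_le_CDL hJ hK hκ' v (by linarith) hu)
  filter_upwards [hJ.2] with z hz
  congr 1
  have hw' : {p | v ≤ κ' p}.indicator (1 : ℝ → ℝ) z.1
      = if v ≤ κ (max α (min β z.1)) then 1 else 0 := by
    simp only [indicator_apply, mem_ofPred_eq, hclamp hz.1, Pi.one_apply]
  simp only [hw', indicator_apply, mem_Icc, mem_Ioo, mem_Ici, mem_ofPred_eq, Pi.one_apply]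
  rcases lt_or_ge z.1 α with h1 | h1
  · rw [max_eq_left (min_le_of_right_le h1.le)]
    simp [not_le.2 hκα, not_le.2 h1, not_lt.2 (h1.trans_le hαβ).le,
      not_le.2 ((h1.trans_le hαβ).trans hβu)]
  rcases le_or_gt z.1 β with h2 | h2
  · rw [min_eq_right h2, max_eq_right h1]
    simp [h1, h2, not_lt.2 h2, not_le.2 (h2.trans_lt hβu)]
  · rw [min_eq_left h2.le, max_eq_right hαβ]
    rcases lt_or_ge z.1 u with h3 | h3
    · simp [hκβ, not_le.2 h2, h2, h3, not_le.2 h3]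
    · simp [hκβ, not_le.2 h2, h2, h3, not_lt.2 h3]

lemma indicator_mul_indicator_Ico_mul_le_of_clamp {α β u t p y : ℝ} {E : Set ℝ} (hp : 0 ≤ p)
    (hy : y ∈ Icc (0:ℝ) 1) (hαβ : α ≤ β) (hβu : β < u) (hu : u ≤ 1) (hβt : β < t)
    (hone : ∀ x ∈ Ioo β t, v ≤ κ x → x ∈ E) :
    {x | v ≤ κ x}.indicator 1 p * (Ico α t).indicator 1 p * (y - p)
      ≤ ({x | v ≤ κ x}.indicator 1 p * (Icc α β).indicator 1 p + (Ioo β u).indicator 1 p)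
          * (y - u) + (u - α) * (Ico α t).indicator 1 p + (Ioo β u).indicator 1 p
        + E.indicator 1 p := by
  obtain ⟨hy0, hy1⟩ := hy
  have hE0 : 0 ≤ E.indicator (1 : ℝ → ℝ) p := indicator_nonneg (fun _ _ => zero_le_one) _
  have hw0 : 0 ≤ {x | v ≤ κ x}.indicator (1 : ℝ → ℝ) p :=
    indicator_nonneg (fun _ _ => zero_le_one) _
  have hw1 : {x | v ≤ κ x}.indicator (1 : ℝ → ℝ) p ≤ 1 := (abs_le.1 (abs_indicator_one_le _ p)).2
  rcases lt_or_ge p α with h1 | h1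
  · have hI : p ∉ Ico α t := fun h => h1.not_ge h.1
    have hC : p ∉ Icc α β := fun h => h1.not_ge h.1
    have hO : p ∉ Ioo β u := fun h => (h1.trans_le hαβ).not_gt h.1
    simp only [indicator_of_notMem hI, indicator_of_notMem hC, indicator_of_notMem hO]
    linarith
  rcases le_or_gt p β with h2 | h2
  · have hI : p ∈ Ico α t := ⟨h1, h2.trans_lt hβt⟩
    have hC : p ∈ Icc α β := ⟨h1, h2⟩
    have hO : p ∉ Ioo β u := fun h => h2.not_gt h.1
    simp only [indicator_of_mem hI, indicator_of_mem hC, indicator_of_notMem hO, Pi.one_apply]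
    nlinarith
  have hC : p ∉ Icc α β := fun h => h2.not_ge h.2
  rcases lt_or_ge p u with h3 | h3
  · have hO : p ∈ Ioo β u := ⟨h2, h3⟩
    by_cases hI : p ∈ Ico α t
    · simp only [indicator_of_mem hI, indicator_of_notMem hC, indicator_of_mem hO, Pi.one_apply]
      nlinarith
    · simp only [indicator_of_notMem hI, indicator_of_notMem hC, indicator_of_mem hO,
        Pi.one_apply]
      linarith
  have hO : p ∉ Ioo β u := fun h => h3.not_gt h.2
  by_cases hI : p ∈ Ico α t
  · by_cases hv : v ≤ κ p
    · simp only [indicator_of_mem hI, indicator_of_notMem hC, indicator_of_notMem hO,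
        indicator_of_mem (show p ∈ {x | v ≤ κ x} from hv),
        indicator_of_mem (hone _ ⟨h2, hI.2⟩ hv), Pi.one_apply]
      linarith
    · simp only [indicator_of_mem hI, indicator_of_notMem hC, indicator_of_notMem hO,
        indicator_of_notMem (show p ∉ {x | v ≤ κ x} from hv), Pi.one_apply]
      linarith
  · simp only [indicator_of_notMem hI, indicator_of_notMem hC, indicator_of_notMem hO]
    linarith

lemma integral_window_le_of_clamp (hJ : IsPredDist J) (hK : ValidClass K) (hκ : κ ∈ K)
    (hw : AEStronglyMeasurable (fun z : ℝ × ℝ => {p | v ≤ κ p}.indicator (1 : ℝ → ℝ) z.1) J)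
    {α β u t : ℝ} {E : Set ℝ} (hα : 0 ≤ α) (hαβ : α ≤ β) (hβu : β < u) (hu : u ≤ 1)
    (hβt : β < t) (hκα : κ α < v) (hκβ : v ≤ κ β) (hE : MeasurableSet E)
    (hone : ∀ x ∈ Ioo β t, v ≤ κ x → x ∈ E) :
    ∫ z, {p | v ≤ κ p}.indicator 1 z.1 * (Ico α t).indicator 1 z.1 * (z.2 - z.1) ∂J
      ≤ CDL K J / 2 + (u - α) * ∫ z, (Ico α t).indicator 1 z.1 ∂J
        + ∫ z, (Ioo β u).indicator 1 z.1 ∂J + ∫ z, E.indicator 1 z.1 ∂J := by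
  set w : ℝ → ℝ := {p | v ≤ κ p}.indicator 1
  have hI := integrable_indicator_one_fst hJ (measurableSet_Ico (a := α) (b := t))
  have hC := integrable_indicator_one_fst hJ (measurableSet_Icc (a := α) (b := β))
  have hO := integrable_indicator_one_fst hJ (measurableSet_Ioo (a := β) (b := u))
  have hIE := integrable_indicator_one_fst hJ hE
  have hT : Integrable (fun z : ℝ × ℝ =>
      (w z.1 * (Icc α β).indicator 1 z.1 + (Ioo β u).indicator 1 z.1) * (z.2 - u)) J :=
    (integrable_snd_sub hJ u).bdd_mul (c := 2) ((hw.mul hC.1).add hO.1)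
      (Eventually.of_forall fun z => by
        refine (norm_add_le _ _).trans ?_
        have hw1 : |w z.1| ≤ 1 := abs_indicator_one_le _ _
        rw [norm_mul, Real.norm_eq_abs, Real.norm_eq_abs, Real.norm_eq_abs]
        linarith [mul_le_one₀ hw1 (abs_nonneg _) (abs_indicator_one_le (Icc α β) z.1),
          abs_indicator_one_le (Ioo β u) z.1])
  have hTI : Integrable (fun z : ℝ × ℝ =>
      (w z.1 * (Icc α β).indicator 1 z.1 + (Ioo β u).indicator 1 z.1) * (z.2 - u)
        + (u - α) * (Ico α t).indicator 1 z.1) J := hT.add (hI.const_mul (u - α))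
  have hTIO : Integrable (fun z : ℝ × ℝ =>
      (w z.1 * (Icc α β).indicator 1 z.1 + (Ioo β u).indicator 1 z.1) * (z.2 - u)
        + (u - α) * (Ico α t).indicator 1 z.1 + (Ioo β u).indicator 1 z.1) J := hTI.add hO
  calc _ ≤ ∫ z, ((w z.1 * (Icc α β).indicator 1 z.1 + (Ioo β u).indicator 1 z.1) * (z.2 - u)
          + (u - α) * (Ico α t).indicator 1 z.1 + (Ioo β u).indicator 1 z.1
          + E.indicator 1 z.1) ∂J := by
        refine integral_mono_ae (integrable_indicator_mul_indicator_Ico_mul hJ hw α t)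
          (hTIO.add hIE) ?_
        filter_upwards [hJ.2] with z hz
        exact indicator_mul_indicator_Ico_mul_le_of_clamp hz.1.1
          (by rcases hz.2 with h | h <;> simp [h]) hαβ hβu hu hβt hone
    _ = ∫ z, (w z.1 * (Icc α β).indicator 1 z.1 + (Ioo β u).indicator 1 z.1) * (z.2 - u) ∂J
          + (u - α) * ∫ z, (Ico α t).indicator 1 z.1 ∂J + ∫ z, (Ioo β u).indicator 1 z.1 ∂J
          + ∫ z, E.indicator 1 z.1 ∂J := by
        rw [integral_add hTIO hIE, integral_add hTI hO, integral_add hT (hI.const_mul _),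
          integral_const_mul]
    _ ≤ _ := by linarith [integral_clamp_regret_le_CDL hJ hK hκ hα hαβ hβu hu hκα hκβ]

lemma integral_window_le_of_lt (hJ : IsPredDist J) (hK : ValidClass K) (hκ : κ ∈ K)
    (hw : AEStronglyMeasurable (fun z : ℝ × ℝ => {p | v ≤ κ p}.indicator (1 : ℝ → ℝ) z.1) J)
    {α t τ : ℝ} (hα : 0 ≤ α) (hαt : α < t) (ht : t ≤ 1) (hκα : κ α < v) (hτ : 0 < τ) :
    ∫ z, {p | v ≤ κ p}.indicator 1 z.1 * (Ico α t).indicator 1 z.1 * (z.2 - z.1) ∂J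
      ≤ CDL K J / 2 + (t - α) * ∫ z, (Ico α t).indicator 1 z.1 ∂J + 2 * τ := by
  have := hJ.1
  have hD := CDL_nonneg hJ hK
  have hP0 : 0 ≤ ∫ z, (Ico α t).indicator (1 : ℝ → ℝ) z.1 ∂J :=
    integral_nonneg fun _ => indicator_nonneg (fun _ _ => zero_le_one) _
  have hαP := mul_nonneg (sub_nonneg.2 hαt.le) hP0
  by_cases hO : ∃ x ∈ Ico α t, v ≤ κ x
  swap
  · push Not at hO
    have hzero : ∀ z : ℝ × ℝ,
        {p | v ≤ κ p}.indicator (1 : ℝ → ℝ) z.1 * (Ico α t).indicator 1 z.1 * (z.2 - z.1)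
          = 0 := by
      intro z
      by_cases hI : z.1 ∈ Ico α t
      · rw [indicator_of_notMem (show z.1 ∉ {p | v ≤ κ p} from not_le.2 (hO _ hI))]
        ring
      · rw [indicator_of_notMem hI]
        ring
    simp only [hzero, integral_zero]
    linarith
  obtain ⟨x₀, hx₀⟩ := hO
  set O := {x | x ∈ Ico α t ∧ v ≤ κ x}
  obtain ⟨β, ⟨hβI, hκβ⟩, hμβ, hβσ⟩ := exists_mem_measureReal_Ioo_csSup_lt (J.map Prod.fst)
    (S := O) ⟨x₀, hx₀⟩ ⟨t, fun x hx => hx.1.2.le⟩ hτ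
  obtain ⟨c, hβc, hμc⟩ := exists_gt_measureReal_Ioo_lt (J.map Prod.fst) β hτ
  have hblock := integral_window_le_of_clamp hJ hK hκ hw (u := min c t) hα hβI.1
    (lt_min hβc hβI.2) ((min_le_right _ _).trans ht) hβI.2 hκα hκβ measurableSet_Ioo
    (fun x hx hv => ⟨hx.1, hβσ x ⟨⟨hβI.1.trans hx.1.le, hx.2⟩, hv⟩ hx.1⟩)
  have hμ₁ : ∫ z, (Ioo β (min c t)).indicator (1 : ℝ → ℝ) z.1 ∂J ≤ τ := by
    rw [integral_indicator_one_fst measurableSet_Ioo]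
    exact ((measureReal_mono (Ioo_subset_Ioo_right (min_le_left _ _))).trans_lt hμc).le
  have hμ₂ : ∫ z, (Ioo β (sSup O)).indicator (1 : ℝ → ℝ) z.1 ∂J ≤ τ := by
    rw [integral_indicator_one_fst measurableSet_Ioo]
    exact hμβ.le
  have hcoef : (min c t - α) * ∫ z, (Ico α t).indicator (1 : ℝ → ℝ) z.1 ∂J
      ≤ (t - α) * ∫ z, (Ico α t).indicator 1 z.1 ∂J :=
    mul_le_mul_of_nonneg_right (by linarith [min_le_right c t]) hP0
  linarith

lemma integral_window_le_add (hJ : IsPredDist J)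
    (hw : AEStronglyMeasurable (fun z : ℝ × ℝ => {p | v ≤ κ p}.indicator (1 : ℝ → ℝ) z.1) J)
    {s α t A B : ℝ} (hsα : s ≤ α) (hαt : α ≤ t)
    (hA : ∫ z, {p | v ≤ κ p}.indicator 1 z.1 * (Ico s α).indicator 1 z.1 * (z.2 - z.1) ∂J
      ≤ A + (t - s) * ∫ z, (Ico s α).indicator 1 z.1 ∂J)
    (hB : ∫ z, {p | v ≤ κ p}.indicator 1 z.1 * (Ico α t).indicator 1 z.1 * (z.2 - z.1) ∂J
      ≤ B + (t - s) * ∫ z, (Ico α t).indicator 1 z.1 ∂J) :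
    ∫ z, {p | v ≤ κ p}.indicator 1 z.1 * (Ico s t).indicator 1 z.1 * (z.2 - z.1) ∂J
      ≤ A + B + (t - s) * ∫ z, (Ico s t).indicator 1 z.1 ∂J := by
  have hsplit : ∀ x, (Ico s t).indicator (1 : ℝ → ℝ) x
      = (Ico s α).indicator 1 x + (Ico α t).indicator 1 x := fun x => by
    rw [← Ico_union_Ico_eq_Ico hsα hαt, indicator_union_of_disjoint Ico_disjoint_Ico_same]
  have hL : ∫ z, {p | v ≤ κ p}.indicator 1 z.1 * (Ico s t).indicator 1 z.1 * (z.2 - z.1) ∂J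
      = ∫ z, {p | v ≤ κ p}.indicator 1 z.1 * (Ico s α).indicator 1 z.1 * (z.2 - z.1) ∂J
        + ∫ z, {p | v ≤ κ p}.indicator 1 z.1 * (Ico α t).indicator 1 z.1 * (z.2 - z.1) ∂J := by
    rw [← integral_add (integrable_indicator_mul_indicator_Ico_mul hJ hw s α)
      (integrable_indicator_mul_indicator_Ico_mul hJ hw α t)]
    simp only [hsplit]
    congr 1 with z
    ring
  have hP : ∫ z, (Ico s t).indicator (1 : ℝ → ℝ) z.1 ∂J
      = ∫ z, (Ico s α).indicator 1 z.1 ∂J + ∫ z, (Ico α t).indicator 1 z.1 ∂J := by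
    simp only [hsplit]
    exact integral_add (integrable_indicator_one_fst hJ measurableSet_Ico)
      (integrable_indicator_one_fst hJ measurableSet_Ico)
  rw [hL, hP]
  linarith

lemma integral_window_le (hJ : IsPredDist J) (hK : ValidClass K) (hκ : κ ∈ K)
    (hw : AEStronglyMeasurable (fun z : ℝ × ℝ => {p | v ≤ κ p}.indicator (1 : ℝ → ℝ) z.1) J)
    {s t : ℝ} (hs : 0 ≤ s) (ht : t ≤ 1) :
    ∫ z, {p | v ≤ κ p}.indicator 1 z.1 * (Ico s t).indicator 1 z.1 * (z.2 - z.1) ∂J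
      ≤ CDL K J + (t - s) * ∫ z, (Ico s t).indicator 1 z.1 ∂J := by
  have := hJ.1
  have hD := CDL_nonneg hJ hK
  refine le_of_forall_pos_le_add fun ε hε => ?_
  by_cases hZ : ∃ x ∈ Ico s t, κ x < v
  swap
  · push Not at hZ
    have := integral_window_le_of_ones hJ hK hw (E := ∅) hs ht MeasurableSet.empty
      fun x hx hκx => absurd (hZ x hx) (not_le.2 hκx)
    simp only [indicator_empty, integral_zero, add_zero] at this
    linarith
  obtain ⟨x₀, hx₀⟩ := hZ
  set Z := {x | x ∈ Ico s t ∧ κ x < v}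
  obtain ⟨α, ⟨⟨hsα, hαt⟩, hκα⟩, hμα, hαZ⟩ := exists_mem_measureReal_Ioo_csInf_lt
    (J.map Prod.fst) (S := Z) ⟨x₀, hx₀⟩ ⟨s, fun x hx => hx.1.1⟩ (div_pos hε three_pos)
  have hμ : ∫ z, (Ioo (sInf Z) α).indicator (1 : ℝ → ℝ) z.1 ∂J ≤ ε / 3 := by
    rw [integral_indicator_one_fst measurableSet_Ioo]
    exact hμα.le
  have hP0 : ∀ a b : ℝ, 0 ≤ ∫ z, (Ico a b).indicator (1 : ℝ → ℝ) z.1 ∂J := fun _ _ =>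
    integral_nonneg fun _ => indicator_nonneg (fun _ _ => zero_le_one) _
  have hlow := integral_window_le_of_ones hJ hK hw (E := Ioo (sInf Z) α) hs (hαt.le.trans ht)
    measurableSet_Ioo fun x hx hκx => ⟨hαZ x ⟨⟨hx.1, hx.2.trans hαt⟩, hκx⟩ hx.2, hx.2⟩
  have hup := integral_window_le_of_lt hJ hK hκ hw (hs.trans hsα) hαt ht hκα
    (div_pos hε three_pos)
  have hcoefL := mul_le_mul_of_nonneg_right (sub_le_sub_right hαt.le s) (hP0 s α)
  have hcoefR := mul_le_mul_of_nonneg_right (sub_le_sub_left hsα t) (hP0 α t)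
  have := integral_window_le_add hJ hw hsα hαt.le
    (A := CDL K J / 2 + ∫ z, (Ioo (sInf Z) α).indicator 1 z.1 ∂J)
    (B := CDL K J / 2 + 2 * (ε / 3)) (by linarith) (by linarith)
  linarith

lemma integral_le_integral_mul_indicator_Ico_zero_one (hJ : IsPredDist J)
    (hint : Integrable (fun z : ℝ × ℝ => {p | v ≤ κ p}.indicator (1 : ℝ → ℝ) z.1 * (z.2 - z.1)) J) :
    ∫ z, {p | v ≤ κ p}.indicator 1 z.1 * (z.2 - z.1) ∂J
      ≤ ∫ z, {p | v ≤ κ p}.indicator 1 z.1 * (Ico 0 1).indicator 1 z.1 * (z.2 - z.1) ∂J := by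
  refine integral_mono_ae hint (integrable_indicator_mul_indicator_Ico_mul hJ
    (aestronglyMeasurable_fst_of_mul_sub hJ hint.1) 0 1) ?_
  filter_upwards [hJ.2] with z hz
  rcases hz.1.2.lt_or_eq with h1 | h1
  · rw [indicator_of_mem (show z.1 ∈ Ico (0 : ℝ) 1 from ⟨hz.1.1, h1⟩), Pi.one_apply, mul_one]
  · have hy : z.2 - z.1 ≤ 0 := by rcases hz.2 with h | h <;> simp [h, h1]
    rw [indicator_of_notMem (show z.1 ∉ Ico (0 : ℝ) 1 from fun h => h.2.ne h1), mul_zero,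
      zero_mul]
    exact mul_nonpos_of_nonneg_of_nonpos (indicator_nonneg (fun _ _ => zero_le_one) _) hy

lemma integral_le_mul_CDL_add_inv (hJ : IsPredDist J) (hK : ValidClass K) (hκ : κ ∈ K)
    (hint : Integrable (fun z : ℝ × ℝ => {p | v ≤ κ p}.indicator (1 : ℝ → ℝ) z.1 * (z.2 - z.1)) J)
    {n : ℕ} (hn : 0 < n) :
    ∫ z, {p | v ≤ κ p}.indicator 1 z.1 * (z.2 - z.1) ∂J ≤ n * CDL K J + 1 / n := by
  have := hJ.1
  have hn' : (0 : ℝ) < n := Nat.cast_pos.2 hn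
  have hw := aestronglyMeasurable_fst_of_mul_sub hJ hint.1
  calc ∫ z, {p | v ≤ κ p}.indicator 1 z.1 * (z.2 - z.1) ∂J
      ≤ ∫ z, {p | v ≤ κ p}.indicator 1 z.1 * (Ico 0 1).indicator 1 z.1 * (z.2 - z.1) ∂J :=
        integral_le_integral_mul_indicator_Ico_zero_one hJ hint
    _ = ∑ j ∈ Finset.range n, ∫ z, {p | v ≤ κ p}.indicator 1 z.1
          * (Ico ((j : ℝ) / n) ((j + 1) / n)).indicator 1 z.1 * (z.2 - z.1) ∂J := by
        rw [← integral_finsetSum _ fun j _ => integrable_indicator_mul_indicator_Ico_mul hJ hw _ _]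
        congr 1 with z
        rw [← sum_indicator_Ico_div hn, Finset.mul_sum, Finset.sum_mul]
    _ ≤ ∑ j ∈ Finset.range n, (CDL K J
          + 1 / n * ∫ z, (Ico ((j : ℝ) / n) ((j + 1) / n)).indicator 1 z.1 ∂J) := by
        refine Finset.sum_le_sum fun j hj => ?_
        have hj' : (j : ℝ) + 1 ≤ n := by exact_mod_cast Finset.mem_range.1 hj
        have hwidth : ((j : ℝ) + 1) / n - j / n = 1 / n := by ring
        simpa only [hwidth] using integral_window_le hJ hK hκ hw (div_nonneg j.cast_nonneg hn'.le)
          ((div_le_one hn').2 hj')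
    _ = n * CDL K J + 1 / n * ∫ z, (Ico 0 1).indicator (1 : ℝ → ℝ) z.1 ∂J := by
        rw [Finset.sum_add_distrib, ← Finset.mul_sum,
          ← integral_finsetSum _ fun j _ => integrable_indicator_one_fst hJ measurableSet_Ico]
        simp only [sum_indicator_Ico_div hn, Finset.sum_const, Finset.card_range, nsmul_eq_mul]
    _ ≤ n * CDL K J + 1 / n := by
        have hP : ∫ z, (Ico 0 1).indicator (1 : ℝ → ℝ) z.1 ∂J ≤ 1 := by
          rw [integral_indicator_one_fst measurableSet_Ico]
          exact measureReal_le_one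
        have := mul_le_mul_of_nonneg_left hP (one_div_pos.2 hn').le
        linarith

end Blocks

lemma le_two_mul_sqrt_add_of_forall_nat {E D : ℝ} (hD : 0 ≤ D)
    (h : ∀ n : ℕ, 0 < n → E ≤ n * D + 1 / n) : E ≤ 2 * √D + D := by
  refine le_of_forall_pos_le_add fun η hη => ?_
  set a := √D + η
  have ha : 0 < a := by positivity
  set n := ⌊1 / a⌋₊ + 1
  have hn : (0 : ℝ) < n := by positivity
  have hn_gt : 1 / a < n := by simpa [n] using Nat.lt_floor_add_one (1 / a)
  have hn_le : (n : ℝ) ≤ 1 / a + 1 := by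
    simpa [n] using Nat.floor_le (one_div_pos.2 ha).le
  have hinv : 1 / (n : ℝ) < a := by
    rw [div_lt_iff₀ hn]; rw [div_lt_iff₀ ha] at hn_gt; linarith
  have hDa : D / a ≤ √D := by
    rw [div_le_iff₀ ha]
    nlinarith [Real.sq_sqrt hD, Real.sqrt_nonneg D]
  have hnD : n * D ≤ √D + D := by
    calc n * D ≤ (1 / a + 1) * D := mul_le_mul_of_nonneg_right hn_le hD
      _ = D / a + D := by ring
      _ ≤ √D + D := by linarith
  linarith [h n (by exact_mod_cast hn)]

/-- upper-threshold calibration errors are bounded by `C·√(CDL_K(J))`. -/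
theorem upper_threshold_CE_bound :
    ∃ C : ℝ, 0 < C ∧ ∀ (J : Measure (ℝ × ℝ)) (K : Set (ℝ → ℝ)),
      IsPredDist J → ValidClass K →
      ∀ κ ∈ K, ∀ v ∈ Icc (0:ℝ) 1,
        (∫ z, Set.indicator {p : ℝ | v ≤ κ p} (fun _ => (1:ℝ)) z.1 * (z.2 - z.1) ∂J) ≤
          C * Real.sqrt (CDL K J) := by
  refine ⟨4, by norm_num, fun J K hJ hK κ hκ v _ => ?_⟩
  show ∫ z, {p | v ≤ κ p}.indicator (1 : ℝ → ℝ) z.1 * (z.2 - z.1) ∂J ≤ 4 * √(CDL K J)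
  have hD := CDL_nonneg hJ hK
  have hsqrt : CDL K J ≤ 2 * √(CDL K J) := by
    nlinarith [Real.sq_sqrt hD, Real.sqrt_nonneg (CDL K J), CDL_le_two hJ hK]
  by_cases hint :
      Integrable (fun z : ℝ × ℝ => {p | v ≤ κ p}.indicator (1 : ℝ → ℝ) z.1 * (z.2 - z.1)) J
  · have := le_two_mul_sqrt_add_of_forall_nat hD fun n hn =>
      integral_le_mul_CDL_add_inv hJ hK hκ hint hn
    linarith
  · rw [integral_undef hint]
    positivity
end
end

section
/- Let J be the probability distribution on [0,1] × {0,1} that puts mass 1/2 on the point (0, 0) and mass 1/2 on the point (1/2, 1). Let M₋ be the class of nonincreasing functions [0,1] → [0,1] and let W = thr'(M₋). Then CE_W(J) ≥ 1/4, yet CDL_{M₋}(J) ≤ 0. In particular, the quadratic characterization CE_{thr'(K)}(J)² ≲ CDL_K(J) fails for K = M₋ (which is translation invariant but does not contain the identity). -/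
open MeasureTheory Set

noncomputable section

/-- The class `M₋` of nonincreasing post-processings `[0,1] → [0,1]`. -/
def Mminus : Set (ℝ → ℝ) :=
  { κ | (∀ p ∈ Icc (0:ℝ) 1, κ p ∈ Icc (0:ℝ) 1) ∧ AntitoneOn κ (Icc (0:ℝ) 1) }


/-! Properness gives `ℓ(0,0) ≤ ℓ(1/2,0)` and, at `q = 1/2`, trades the gain
`ℓ(1/2,1) − ℓ(κ(1/2),1)` on the point `(1/2,1)` for the loss `ℓ(κ(1/2),0) − ℓ(1/2,0)`.
The total gain of post-processing by `κ` is thus at most `ℓ(κ(1/2),0) − ℓ(κ(0),0)`, which is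
`≤ 0` because `ℓ(·,0)` is nondecreasing for a proper loss while `κ` is nonincreasing. On the
other hand the constant post-processing `1 ∈ M₋` yields the weight `1`, whose calibration
error `E[y − p]` is `1/4`. -/

def halfDirac {α : Type*} [MeasurableSpace α] (a b : α) : Measure α :=
  (1/2 : ENNReal) • Measure.dirac a + (1/2 : ENNReal) • Measure.dirac b

lemma integral_halfDirac {α : Type*} [MeasurableSpace α] [MeasurableSingletonClass α]
    (f : α → ℝ) (a b : α) : ∫ z, f z ∂halfDirac a b = (f a + f b) / 2 := by
  have hia : Integrable f (Measure.dirac a) := integrable_dirac enorm_lt_top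
  have hib : Integrable f (Measure.dirac b) := integrable_dirac enorm_lt_top
  rw [halfDirac, integral_add_measure (hia.smul_measure (by simp)) (hib.smul_measure (by simp)),
    integral_smul_measure, integral_smul_measure, integral_dirac, integral_dirac]
  norm_num
  ring

lemma signP_le_one (t : ℝ) : signP t ≤ 1 := by
  unfold signP signS; split_ifs <;> norm_num

lemma neg_one_le_signP (t : ℝ) : -1 ≤ signP t := by
  unfold signP signS; split_ifs <;> norm_num

lemma le_one_of_mem_thr' {K : Set (ℝ → ℝ)} {w : ℝ → ℝ} (hw : w ∈ thr' K) (p : ℝ) :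
    w p ≤ 1 := by
  rcases hw with ⟨κ, -, rfl⟩ | ⟨v, rfl⟩
  · exact signP_le_one _
  · linarith [neg_one_le_signP (p - v)]

lemma const_mem_Mminus {c : ℝ} (hc : c ∈ Icc (0:ℝ) 1) : (fun _ => c) ∈ Mminus :=
  ⟨fun _ _ => hc, antitoneOn_const⟩

lemma IsProper.monotoneOn_zero {ℓ : ℝ → ℝ → ℝ} (hℓ : IsProper ℓ) :
    MonotoneOn (fun p => ℓ p 0) (Icc (0:ℝ) 1) := by
  intro a ha b hb hab
  have hab' := hℓ b hb a ha
  have hba' := hℓ a ha b hb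
  unfold elos at hab' hba'
  rcases hab.eq_or_lt with rfl | hlt
  · rfl
  -- Weighting the two properness inequalities by `b` and `a` eliminates `ℓ(·,1)`,
  -- leaving `(b − a)(ℓ(b,0) − ℓ(a,0)) ≥ 0`.
  · nlinarith [mul_le_mul_of_nonneg_left hab' hb.1, mul_le_mul_of_nonneg_left hba' ha.1]

lemma one_quarter_le_CE_thr'_halfDirac {K : Set (ℝ → ℝ)} (hK : (fun _ => 1) ∈ K) :
    1/4 ≤ CE (thr' K) (halfDirac ((0:ℝ), (0:ℝ)) ((1/2:ℝ), (1:ℝ))) := by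
  refine le_csSup ⟨1/4, ?_⟩ ⟨fun _ => 1, Or.inl ⟨_, hK, ?_⟩, ?_⟩
  · rintro x ⟨w, hw, rfl⟩
    rw [integral_halfDirac]
    linarith [le_one_of_mem_thr' hw (1/2)]
  · funext p
    norm_num [signP, signS]
  · rw [integral_halfDirac]
    norm_num

lemma integral_sub_loss_halfDirac_nonpos {ℓ : ℝ → ℝ → ℝ} (hℓ : IsProper ℓ) {κ : ℝ → ℝ}
    (hκ : κ ∈ Mminus) :
    ∫ z, (ℓ z.1 z.2 - ℓ (κ z.1) z.2) ∂halfDirac ((0:ℝ), (0:ℝ)) ((1/2:ℝ), (1:ℝ)) ≤ 0 := by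
  have h0 : (0:ℝ) ∈ Icc (0:ℝ) 1 := by norm_num
  have h12 : (1/2:ℝ) ∈ Icc (0:ℝ) 1 := by norm_num
  have truthful_at_zero := hℓ (1/2) h12 0 h0
  have truthful_at_half := hℓ (κ (1/2)) (hκ.1 _ h12) (1/2) h12
  have loss_zero_le : ℓ (κ (1/2)) 0 ≤ ℓ (κ 0) 0 :=
    hℓ.monotoneOn_zero (hκ.1 _ h12) (hκ.1 _ h0) (hκ.2 h0 h12 (by norm_num))
  unfold elos at truthful_at_zero truthful_at_half
  rw [integral_halfDirac]
  norm_num at truthful_at_zero truthful_at_half ⊢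
  linarith

lemma CDL_Mminus_halfDirac_nonpos :
    CDL Mminus (halfDirac ((0:ℝ), (0:ℝ)) ((1/2:ℝ), (1:ℝ))) ≤ 0 := by
  refine Real.sSup_le ?_ le_rfl
  rintro x ⟨ℓ, κ, hℓ, hκ, rfl⟩
  exact integral_sub_loss_halfDirac_nonpos hℓ.1 hκ

/-- for the two-point distribution `J` putting mass `1/2` on `(0,0)` and on
`(1/2,1)`, we have `CE_{thr'(M₋)}(J) ≥ 1/4` yet `CDL_{M₋}(J) ≤ 0`. -/
theorem translation_invariance_insufficient (J : Measure (ℝ × ℝ))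
    (hJ : J = (1/2 : ENNReal) • Measure.dirac ((0:ℝ), (0:ℝ)) +
              (1/2 : ENNReal) • Measure.dirac ((1/2:ℝ), (1:ℝ))) :
    1/4 ≤ CE (thr' Mminus) J ∧ CDL Mminus J ≤ 0 := by
  subst hJ
  exact ⟨one_quarter_le_CE_thr'_halfDirac (const_mem_Mminus (by norm_num)),
    CDL_Mminus_halfDirac_nonpos⟩
end
end

section
/- (Pool Adjacent Violators guarantee.) Let (p₁, y₁), …, (p_m, y_m) ∈ [0,1] × {0,1} be a finite sequence of prediction–outcome pairs. Then there exists a single nondecreasing function κ̂ ∈ M₊ such that for every proper loss ℓ ∈ L* and every κ ∈ M₊: Σ_{i=1}^m ℓ(κ̂(pᵢ), yᵢ) ≤ Σ_{i=1}^m ℓ(κ(pᵢ), yᵢ). In other words, one monotone post-processing simultaneously minimizes the empirical loss over all monotone post-processings for every proper loss. -/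
open MeasureTheory Set

noncomputable section

/-!
Pool Adjacent Violators. Write `ℓ(c, q) = ℓ(c, 0) + q · D(c)` with `D(c) = ℓ(c, 1) - ℓ(c, 0)`;
properness makes `D` antitone. Among the nonempty sets of data points that are closed downward
in `p`, pick one of minimal mean `μ` and predict `μ` on it. For a monotone `κ`, the superlevel
sets of `D ∘ κ ∘ p` inside this block are again such lower sets, so they carry nonnegative
residual mass `∑ (y - μ)`; by Abel summation the correction `∑ (y - μ) · D(κ(p))` is nonnegative,
and properness pays for replacing each `κ(p i)` by `μ`. Recursing on the remaining points yields
fitted values that stay above `μ`, so the pieces glue to a monotone function.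
-/

section IsotonicFit

variable {ι : Type*}

theorem mul_sum_le_sum_mul_of_superlevel_sum_nonneg (a h : ι → ℝ) (s : Finset ι) :
    ∀ m, (∀ i ∈ s, m ≤ h i) → (∀ t, 0 ≤ ∑ i ∈ s with t < h i, a i) →
      m * ∑ i ∈ s, a i ≤ ∑ i ∈ s, a i * h i := by
  classical
  induction s using Finset.strongInduction with
  | H s ih =>
  intro m hm hsup
  rcases s.eq_empty_or_nonempty with rfl | hs
  · simp
  obtain ⟨i₀, hi₀, hmin⟩ := s.exists_min_image h hs
  set m₀ := h i₀
  have htop : m₀ * ∑ i ∈ s with m₀ < h i, a i ≤ ∑ i ∈ s with m₀ < h i, a i * h i := by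
    refine ih (s.filter fun i => m₀ < h i) (Finset.filter_ssubset.2 ⟨i₀, hi₀, lt_irrefl m₀⟩) m₀
      (fun i hi => (Finset.mem_filter.1 hi).2.le) fun t => ?_
    rw [Finset.filter_filter]
    simpa only [max_lt_iff] using hsup (max m₀ t)
  have hbottom : ∑ i ∈ s with ¬m₀ < h i, a i * h i = m₀ * ∑ i ∈ s with ¬m₀ < h i, a i := by
    rw [Finset.mul_sum]
    refine Finset.sum_congr rfl fun i hi => ?_
    have hi' := Finset.mem_filter.1 hi
    rw [le_antisymm (not_lt.1 hi'.2) (hmin i hi'.1), mul_comm]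
  have htotal : 0 ≤ ∑ i ∈ s, a i := by
    simpa [Finset.filter_true_of_mem fun i hi => (sub_one_lt m₀).trans_le (hmin i hi)]
      using hsup (m₀ - 1)
  calc m * ∑ i ∈ s, a i ≤ m₀ * ∑ i ∈ s, a i := mul_le_mul_of_nonneg_right (hm i₀ hi₀) htotal
    _ = m₀ * ∑ i ∈ s with m₀ < h i, a i + m₀ * ∑ i ∈ s with ¬m₀ < h i, a i := by
      rw [← mul_add, Finset.sum_filter_add_sum_filter_not]
    _ ≤ ∑ i ∈ s with m₀ < h i, a i * h i + ∑ i ∈ s with ¬m₀ < h i, a i * h i := by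
      rw [hbottom]; linarith
    _ = ∑ i ∈ s, a i * h i := Finset.sum_filter_add_sum_filter_not _ _ _

def lossDiff (ℓ : ℝ → ℝ → ℝ) (c : ℝ) : ℝ := ℓ c 1 - ℓ c 0

theorem elos_eq_add_mul_lossDiff (ℓ : ℝ → ℝ → ℝ) (c q μ : ℝ) :
    elos ℓ c q = elos ℓ c μ + (q - μ) * lossDiff ℓ c := by
  unfold elos lossDiff; ring

theorem elos_of_eq_zero_or_eq_one (ℓ : ℝ → ℝ → ℝ) (c : ℝ) {q : ℝ} (hq : q = 0 ∨ q = 1) :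
    elos ℓ c q = ℓ c q := by
  rcases hq with rfl | rfl <;> simp [elos]

theorem IsProper.lossDiff_antitoneOn {ℓ : ℝ → ℝ → ℝ} (hℓ : IsProper ℓ) :
    AntitoneOn (lossDiff ℓ) (Icc 0 1) := by
  intro a ha b hb hab
  have hab' := hℓ b hb a ha
  have hba := hℓ a ha b hb
  rw [elos_eq_add_mul_lossDiff ℓ a a 0, elos_eq_add_mul_lossDiff ℓ b a 0] at hab'
  rw [elos_eq_add_mul_lossDiff ℓ a b 0, elos_eq_add_mul_lossDiff ℓ b b 0] at hba
  simp only [elos] at hab' hba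
  rcases hab.eq_or_lt with rfl | hlt
  · exact le_rfl
  · nlinarith

theorem IsProper.sum_elos_const_le {ℓ : ℝ → ℝ → ℝ} (hℓ : IsProper ℓ) {B : Finset ι}
    {y c : ι → ℝ} {μ : ℝ} (hμ : μ ∈ Icc (0:ℝ) 1) (hc : ∀ i ∈ B, c i ∈ Icc (0:ℝ) 1)
    (hmean : ∑ i ∈ B, (y i - μ) = 0)
    (hsup : ∀ t, 0 ≤ ∑ i ∈ B with t < lossDiff ℓ (c i), (y i - μ)) :
    ∑ i ∈ B, elos ℓ μ (y i) ≤ ∑ i ∈ B, elos ℓ (c i) (y i) := by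
  obtain ⟨m, hm⟩ := (B.image fun i => lossDiff ℓ (c i)).bddBelow
  have habel := mul_sum_le_sum_mul_of_superlevel_sum_nonneg (fun i => y i - μ)
    (fun i => lossDiff ℓ (c i)) B m (fun i hi => hm (Finset.mem_coe.2 (Finset.mem_image_of_mem _ hi)))
    hsup
  rw [hmean, mul_zero] at habel
  calc ∑ i ∈ B, elos ℓ μ (y i)
      = ∑ i ∈ B, elos ℓ μ μ + (∑ i ∈ B, (y i - μ)) * lossDiff ℓ μ := by
        rw [Finset.sum_congr rfl fun i _ => elos_eq_add_mul_lossDiff ℓ μ (y i) μ,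
          Finset.sum_add_distrib, Finset.sum_mul]
    _ ≤ ∑ i ∈ B, elos ℓ (c i) μ + ∑ i ∈ B, (y i - μ) * lossDiff ℓ (c i) := by
        rw [hmean, zero_mul, add_zero]
        linarith [Finset.sum_le_sum fun i hi => hℓ (c i) (hc i hi) μ hμ]
    _ = ∑ i ∈ B, elos ℓ (c i) (y i) := by
        rw [← Finset.sum_add_distrib]
        exact Finset.sum_congr rfl fun i _ => (elos_eq_add_mul_lossDiff ℓ (c i) (y i) μ).symm

variable (p y : ι → ℝ)

def IsLowerIn (s D : Finset ι) : Prop :=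
  D ⊆ s ∧ ∀ i ∈ D, ∀ j ∈ s, p j ≤ p i → j ∈ D

def IsMeanLowerBound (s : Finset ι) (μ : ℝ) : Prop :=
  ∀ D, IsLowerIn p s D → 0 ≤ ∑ i ∈ D, (y i - μ)

variable {p y}

theorem isLowerIn_self (s : Finset ι) : IsLowerIn p s s :=
  ⟨subset_rfl, fun _ _ _ hj _ => hj⟩

theorem IsLowerIn.union_of_sdiff [DecidableEq ι] {s B D : Finset ι} (hB : IsLowerIn p s B)
    (hD : IsLowerIn p (s \ B) D) : IsLowerIn p s (B ∪ D) := by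
  refine ⟨Finset.union_subset hB.1 fun i hi => (Finset.mem_sdiff.1 (hD.1 hi)).1, ?_⟩
  intro i hi j hj hji
  by_cases hjB : j ∈ B
  · exact Finset.mem_union_left _ hjB
  rcases Finset.mem_union.1 hi with hiB | hiD
  · exact absurd (hB.2 i hiB j hj hji) hjB
  · exact Finset.mem_union_right _ (hD.2 i hiD j (Finset.mem_sdiff.2 ⟨hj, hjB⟩) hji)

theorem IsLowerIn.filter_lt {s B : Finset ι} (hB : IsLowerIn p s B) {g : ι → ℝ}
    (hg : ∀ i ∈ s, ∀ j ∈ s, p j ≤ p i → g i ≤ g j) (t : ℝ) :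
    IsLowerIn p s (B.filter (t < g ·)) := by
  refine ⟨(Finset.filter_subset _ _).trans hB.1, fun i hi j hj hji => ?_⟩
  obtain ⟨hiB, hti⟩ := Finset.mem_filter.1 hi
  exact Finset.mem_filter.2 ⟨hB.2 i hiB j hj hji, hti.trans_le (hg i (hB.1 hiB) j hj hji)⟩

theorem IsMeanLowerBound.sdiff [DecidableEq ι] {s B : Finset ι} {μ : ℝ}
    (h : IsMeanLowerBound p y s μ) (hB : IsLowerIn p s B) (hBμ : ∑ i ∈ B, (y i - μ) = 0) :
    IsMeanLowerBound p y (s \ B) μ := by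
  intro D hD
  have hdisj : Disjoint B D := Finset.disjoint_left.2 fun i hiB hiD =>
    (Finset.mem_sdiff.1 (hD.1 hiD)).2 hiB
  simpa [Finset.sum_union hdisj, hBμ] using h _ (hB.union_of_sdiff hD)

theorem IsMeanLowerBound.le {s B : Finset ι} {μ' μ : ℝ} (h : IsMeanLowerBound p y s μ')
    (hB : IsLowerIn p s B) (hBne : B.Nonempty) (hBμ : ∑ i ∈ B, (y i - μ) = 0) : μ' ≤ μ := by
  have hB' := h B hB
  have hsplit : ∑ i ∈ B, (y i - μ') = ∑ i ∈ B, (y i - μ) + B.card * (μ - μ') := by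
    simp only [Finset.sum_sub_distrib, Finset.sum_const, nsmul_eq_mul]; ring
  rw [hsplit, hBμ, zero_add] at hB'
  have hcard : (0:ℝ) < B.card := by exact_mod_cast hBne.card_pos
  nlinarith

theorem sum_sub_div_card_eq_zero {B : Finset ι} (hB : B.Nonempty) :
    ∑ i ∈ B, (y i - (∑ j ∈ B, y j) / B.card) = 0 := by
  have hcard : (B.card : ℝ) ≠ 0 := by exact_mod_cast hB.card_pos.ne'
  rw [Finset.sum_sub_distrib, Finset.sum_const, nsmul_eq_mul, mul_div_cancel₀ _ hcard, sub_self]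

theorem div_card_mem_Icc {B : Finset ι} (hy : ∀ i ∈ B, y i ∈ Icc (0:ℝ) 1) :
    (∑ i ∈ B, y i) / B.card ∈ Icc (0:ℝ) 1 := by
  refine ⟨div_nonneg (Finset.sum_nonneg fun i hi => (hy i hi).1) B.card.cast_nonneg,
    div_le_one_of_le₀ ?_ B.card.cast_nonneg⟩
  simpa using Finset.sum_le_sum fun i hi => (hy i hi).2

theorem exists_isLowerIn_isMeanLowerBound {s : Finset ι} (hs : s.Nonempty) :
    ∃ B, IsLowerIn p s B ∧ B.Nonempty ∧ IsMeanLowerBound p y s ((∑ i ∈ B, y i) / B.card) := by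
  classical
  obtain ⟨B, hBmem, hBmin⟩ := (s.powerset.filter fun D => D.Nonempty ∧ IsLowerIn p s D).exists_min_image
    (fun D => (∑ i ∈ D, y i) / D.card)
    ⟨s, Finset.mem_filter.2 ⟨Finset.mem_powerset_self s, hs, isLowerIn_self s⟩⟩
  obtain ⟨-, hBne, hB⟩ := Finset.mem_filter.1 hBmem
  refine ⟨B, hB, hBne, fun D hD => ?_⟩
  rcases D.eq_empty_or_nonempty with rfl | hDne
  · simp
  have hle := hBmin D (Finset.mem_filter.2 ⟨Finset.mem_powerset.2 hD.1, hDne, hD⟩)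
  have hcard : (0:ℝ) < D.card := by exact_mod_cast hDne.card_pos
  rw [le_div_iff₀ hcard] at hle
  simp only [Finset.sum_sub_distrib, Finset.sum_const, nsmul_eq_mul]
  linarith

open Classical in
/-- The `max μ` keeps the glued function monotone away from the data points. -/
def poolBelow (p : ι → ℝ) (B : Finset ι) (μ : ℝ) (κ : ℝ → ℝ) (x : ℝ) : ℝ :=
  if ∃ i ∈ B, x ≤ p i then μ else max μ (κ x)

theorem monotone_poolBelow {B : Finset ι} {μ : ℝ} {κ : ℝ → ℝ} (hκ : Monotone κ) :
    Monotone (poolBelow p B μ κ) := by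
  intro x x' hxx'
  by_cases hx' : ∃ i ∈ B, x' ≤ p i
  · obtain ⟨i, hi, hx'i⟩ := hx'
    rw [poolBelow, if_pos ⟨i, hi, hxx'.trans hx'i⟩, poolBelow, if_pos ⟨i, hi, hx'i⟩]
  · calc poolBelow p B μ κ x ≤ max μ (κ x) := by
          unfold poolBelow; split_ifs
          exacts [le_max_left _ _, le_rfl]
      _ ≤ max μ (κ x') := max_le_max le_rfl (hκ hxx')
      _ = poolBelow p B μ κ x' := by rw [poolBelow, if_neg hx']

theorem le_poolBelow (B : Finset ι) (μ : ℝ) (κ : ℝ → ℝ) (x : ℝ) : μ ≤ poolBelow p B μ κ x := by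
  unfold poolBelow
  split_ifs
  exacts [le_rfl, le_max_left _ _]

theorem poolBelow_mem_Icc {B : Finset ι} {μ : ℝ} {κ : ℝ → ℝ} (hμ : μ ∈ Icc (0:ℝ) 1)
    (hκ : ∀ x, κ x ∈ Icc (0:ℝ) 1) (x : ℝ) : poolBelow p B μ κ x ∈ Icc (0:ℝ) 1 := by
  unfold poolBelow
  split_ifs
  exacts [hμ, ⟨hμ.1.trans (le_max_left _ _), max_le hμ.2 (hκ x).2⟩]

theorem poolBelow_apply_of_mem {B : Finset ι} {μ : ℝ} {κ : ℝ → ℝ} {i : ι} (hi : i ∈ B) :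
    poolBelow p B μ κ (p i) = μ :=
  if_pos ⟨i, hi, le_rfl⟩

theorem poolBelow_apply_of_mem_sdiff [DecidableEq ι] {s B : Finset ι} {μ : ℝ} {κ : ℝ → ℝ}
    {i : ι} (hB : IsLowerIn p s B) (hi : i ∈ s \ B) (hμ : μ ≤ κ (p i)) :
    poolBelow p B μ κ (p i) = κ (p i) := by
  obtain ⟨his, hiB⟩ := Finset.mem_sdiff.1 hi
  rw [poolBelow, if_neg fun ⟨j, hj, hij⟩ => hiB (hB.2 j hj i his hij), max_eq_right hμ]

theorem exists_pav_fit (s : Finset ι) (hp : ∀ i ∈ s, p i ∈ Icc (0:ℝ) 1)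
    (hy : ∀ i ∈ s, y i ∈ Icc (0:ℝ) 1) :
    ∃ κhat : ℝ → ℝ, Monotone κhat ∧ (∀ x, κhat x ∈ Icc (0:ℝ) 1) ∧
      (∀ μ, IsMeanLowerBound p y s μ → ∀ i ∈ s, μ ≤ κhat (p i)) ∧
      ∀ ℓ, IsProper ℓ → ∀ κ ∈ Mplus,
        ∑ i ∈ s, elos ℓ (κhat (p i)) (y i) ≤ ∑ i ∈ s, elos ℓ (κ (p i)) (y i) := by
  classical
  induction s using Finset.strongInduction with
  | H s ih =>
  rcases s.eq_empty_or_nonempty with rfl | hs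
  · exact ⟨fun _ => 0, monotone_const, fun _ => ⟨le_rfl, zero_le_one⟩, by simp, by simp⟩
  obtain ⟨B, hB, hBne, hμs⟩ := exists_isLowerIn_isMeanLowerBound (y := y) hs
  set μ := (∑ i ∈ B, y i) / B.card
  have hμ : μ ∈ Icc (0:ℝ) 1 := div_card_mem_Icc fun i hi => hy i (hB.1 hi)
  have hBμ : ∑ i ∈ B, (y i - μ) = 0 := sum_sub_div_card_eq_zero hBne
  obtain ⟨κ', hκ'mono, hκ'01, hκ'lb, hκ'opt⟩ := ih (s \ B) (Finset.sdiff_ssubset hB.1 hBne)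
    (fun i hi => hp i (Finset.mem_sdiff.1 hi).1) (fun i hi => hy i (Finset.mem_sdiff.1 hi).1)
  have hμκ' := hκ'lb μ (hμs.sdiff hB hBμ)
  refine ⟨poolBelow p B μ κ', monotone_poolBelow hκ'mono, poolBelow_mem_Icc hμ hκ'01,
    fun μ' hμ' i _ => (hμ'.le hB hBne hBμ).trans (le_poolBelow B μ κ' _), ?_⟩
  intro ℓ hℓ κ hκ
  have hκp : ∀ i ∈ s, κ (p i) ∈ Icc (0:ℝ) 1 := fun i hi => hκ.1 _ (hp i hi)
  have hanti : ∀ i ∈ s, ∀ j ∈ s, p j ≤ p i → lossDiff ℓ (κ (p i)) ≤ lossDiff ℓ (κ (p j)) :=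
    fun i hi j hj hji => hℓ.lossDiff_antitoneOn (hκp j hj) (hκp i hi)
      (hκ.2 (hp j hj) (hp i hi) hji)
  have hblock : ∑ i ∈ B, elos ℓ (poolBelow p B μ κ' (p i)) (y i)
      ≤ ∑ i ∈ B, elos ℓ (κ (p i)) (y i) := by
    rw [Finset.sum_congr rfl fun i hi => by rw [poolBelow_apply_of_mem hi]]
    exact hℓ.sum_elos_const_le hμ (fun i hi => hκp i (hB.1 hi)) hBμ
      fun t => hμs _ (hB.filter_lt hanti t)
  have hrest : ∑ i ∈ s \ B, elos ℓ (poolBelow p B μ κ' (p i)) (y i)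
      ≤ ∑ i ∈ s \ B, elos ℓ (κ (p i)) (y i) := by
    rw [Finset.sum_congr rfl fun i hi => by rw [poolBelow_apply_of_mem_sdiff hB hi (hμκ' i hi)]]
    exact hκ'opt ℓ hℓ κ hκ
  rw [← Finset.sum_sdiff hB.1, ← Finset.sum_sdiff hB.1 (f := fun i => elos ℓ (κ (p i)) (y i))]
  exact add_le_add hrest hblock

end IsotonicFit

/-- Pool Adjacent Violators guarantee: a single monotone post-processing
simultaneously minimizes the empirical loss over all monotone post-processings, for
every proper loss. -/
theorem pav_omniprediction (m : ℕ) (p y : Fin m → ℝ)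
    (hp : ∀ i, p i ∈ Icc (0:ℝ) 1) (hy : ∀ i, y i = 0 ∨ y i = 1) :
    ∃ κhat ∈ Mplus, ∀ ℓ : ℝ → ℝ → ℝ, Lstar ℓ → ∀ κ ∈ Mplus,
      ∑ i, ℓ (κhat (p i)) (y i) ≤ ∑ i, ℓ (κ (p i)) (y i) := by
  have hy01 : ∀ i ∈ Finset.univ, y i ∈ Icc (0:ℝ) 1 := fun i _ => by
    rcases hy i with h | h <;> simp [h]
  obtain ⟨κhat, hmono, h01, -, hopt⟩ := exists_pav_fit Finset.univ (fun i _ => hp i) hy01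
  refine ⟨κhat, ⟨fun x _ => h01 x, hmono.monotoneOn _⟩, fun ℓ hℓ κ hκ => ?_⟩
  have hsum : ∀ κ' : ℝ → ℝ, ∑ i, ℓ (κ' (p i)) (y i) = ∑ i, elos ℓ (κ' (p i)) (y i) :=
    fun κ' => Finset.sum_congr rfl fun i _ => (elos_of_eq_zero_or_eq_one ℓ _ (hy i)).symm
  rw [hsum, hsum]
  exact hopt ℓ hℓ.1 κ hκ
end
end
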